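/- arXiv:2506.09844 — 10 statements merged into one kernel-verified Lean document; each statement's English description precedes it below -/
import Mathlib

section
/- Let B be a skew left brace. Then the commutator ideal satisfies [B,B]^B = B*B + [B,B]₊ = B*B · [B,B]_• , where [B,B]₊ is the commutator subgroup of the additive group, [B,B]_• is the commutator subgroup of the multiplicative group, and B*B is the additive subgroup generated by all star products a*b. -/
/-- A skew left brace: a set with two group structures `(B,+)` and `(B,·)`
satisfying `a(b+c) = ab - a + ac`. -/
class SkewBrace (B : Type*) extends AddGroup B, Group B where
  mul_add_dist : ∀ a b c : B, a * (b + c) = a * b + -a + a * c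

namespace SkewBrace

variable {B : Type*} [SkewBrace B]

/-- The lambda map `λ_a(b) = -a + ab`. -/
def lam (a b : B) : B := -a + a * b

/-- The star product `a * b = -a + ab - b`. -/
def star (a b : B) : B := -a + a * b + -b

/-- A subbrace: a subgroup of `(B,+)` that is also a subgroup of `(B,·)`. -/
def IsSubbrace (S : Set B) : Prop :=
  ((0 : B) ∈ S ∧ (∀ a ∈ S, ∀ b ∈ S, a + b ∈ S) ∧ (∀ a ∈ S, -a ∈ S)) ∧
  ((1 : B) ∈ S ∧ (∀ a ∈ S, ∀ b ∈ S, a * b ∈ S) ∧ (∀ a ∈ S, a⁻¹ ∈ S))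

/-- A left ideal: a subbrace with `B * S ⊆ S`. -/
def IsLeftIdeal (S : Set B) : Prop :=
  IsSubbrace S ∧ ∀ b : B, ∀ a ∈ S, star b a ∈ S

/-- A strong left ideal: a left ideal normal in `(B,+)`. -/
def IsStrongLeftIdeal (S : Set B) : Prop :=
  IsLeftIdeal S ∧ ∀ b : B, ∀ a ∈ S, b + a + -b ∈ S

/-- An ideal: a strong left ideal which is also a right ideal. -/
def IsIdeal (S : Set B) : Prop :=
  IsStrongLeftIdeal S ∧ ∀ a ∈ S, ∀ b : B, star a b ∈ S

/-- A trivial subbrace: both operations coincide on it. -/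
def IsTrivialSubbrace (S : Set B) : Prop :=
  IsSubbrace S ∧ ∀ a ∈ S, ∀ b ∈ S, a * b = a + b

/-- An abelian subbrace: a trivial subbrace whose group is abelian. -/
def IsAbelianSubbrace (S : Set B) : Prop :=
  IsTrivialSubbrace S ∧ ∀ a ∈ S, ∀ b ∈ S, a + b = b + a

end SkewBrace

namespace SkewBrace

variable (B : Type*) [SkewBrace B]

/-- The generators of the commutator ideal: additive commutators, multiplicative
commutators, and the elements `ab - (a+b)`. -/
def commutatorGens : Set B :=
  {x : B | ∃ a b : B, x = a + b + -a + -b ∨ x = a * b * a⁻¹ * b⁻¹ ∨ x = a * b + -(a + b)}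

/-- The commutator ideal `[B,B]^B`: the smallest ideal containing the generators
(equivalently, the smallest ideal with abelian quotient). -/
def commutatorIdeal : Set B :=
  ⋂₀ {I : Set B | IsIdeal I ∧ commutatorGens B ⊆ I}

/-- `B*B`: the additive subgroup generated by all star products. -/
def starSquare : AddSubgroup B :=
  AddSubgroup.closure {x : B | ∃ a b : B, x = star a b}

/-- `[B,B]₊`: the commutator subgroup of the additive group. -/
def addCommutator : AddSubgroup B :=
  AddSubgroup.closure {x : B | ∃ a b : B, x = a + b + -a + -b}

/-- `[B,B]_•`: the commutator subgroup of the multiplicative group. -/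
def mulCommutator : Subgroup B :=
  Subgroup.closure {x : B | ∃ a b : B, x = a * b * a⁻¹ * b⁻¹}

end SkewBrace


namespace SkewBraceAux

open SkewBrace (lam starSquare mulCommutator addCommutator commutatorGens commutatorIdeal)

variable {B : Type*} [SkewBrace B]

/-! ### Basic identities -/

lemma dist (a b c : B) : a * (b + c) = a * b + -a + a * c := SkewBrace.mul_add_dist a b c

lemma mul_zero' (a : B) : a * (0 : B) = a := by
  have h : a * 0 = a * 0 + -a + a * 0 := by
    have := SkewBrace.mul_add_dist a 0 0
    rwa [add_zero] at this
  have h2 := congrArg (· + -(a * 0)) h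
  simp only [add_neg_cancel, add_neg_cancel_right] at h2
  have h3 : a * 0 + -a + a = a := by rw [← h2, zero_add]
  rwa [add_assoc, neg_add_cancel, add_zero] at h3

lemma zero_eq_one : (0 : B) = 1 := by
  have h1 : (1 : B) * 0 = 1 := mul_zero' 1
  rwa [one_mul] at h1

lemma mul_eq (a b : B) : a * b = a + lam a b := by
  unfold lam; rw [add_neg_cancel_left]

lemma lam_add (a b c : B) : lam a (b + c) = lam a b + lam a c := by
  unfold lam; rw [dist]; simp only [add_assoc]

lemma lam_zero (a : B) : lam a 0 = 0 := by
  unfold lam; rw [mul_zero', neg_add_cancel]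

lemma lam_neg (a b : B) : lam a (-b) = -lam a b := by
  have h := lam_add a b (-b)
  rw [add_neg_cancel, lam_zero] at h
  exact eq_neg_of_add_eq_zero_right h.symm

lemma mul_neg' (a b : B) : a * (-b) = a + -(a * b) + a := by
  have h : a = a * b + -a + a * (-b) := by
    have := dist a b (-b)
    rwa [add_neg_cancel, mul_zero'] at this
  have h2 := congrArg (-(a * b + -a) + ·) h
  simp only [neg_add_cancel_left] at h2
  rw [← h2, neg_add_rev, neg_neg]

lemma lam_comp (a b c : B) : lam a (lam b c) = lam (a * b) c := by
  unfold lam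
  rw [dist, mul_neg', ← mul_assoc]
  simp only [add_assoc, add_neg_cancel_left, neg_add_cancel_left]

lemma lam_one_id (b : B) : lam 1 b = b := by
  unfold lam; rw [one_mul, ← zero_eq_one, neg_zero, zero_add]

lemma add_eq_mul_lam (a b : B) : a + b = a * lam a⁻¹ b := by
  rw [mul_eq a (lam a⁻¹ b), lam_comp, mul_inv_cancel, lam_one_id]

lemma star_eq (a b : B) : SkewBrace.star a b = lam a b + -b := rfl

lemma lam_eq_star (a b : B) : lam a b = SkewBrace.star a b + b := by
  rw [star_eq, neg_add_cancel_right]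

lemma neg_lam_eq (z p : B) : -lam z p = -p + -(SkewBrace.star z p) := by
  rw [lam_eq_star, neg_add_rev]

lemma lam_self_inv (z : B) : lam z z⁻¹ = -z := by
  unfold lam; rw [mul_inv_cancel, ← zero_eq_one, add_zero]

lemma neg_mul_self (a : B) : a * (-a) = -(SkewBrace.star a a) := by
  rw [mul_neg']
  unfold SkewBrace.star
  rw [neg_add_rev, neg_add_rev, neg_neg, add_assoc]

lemma neg_eq_inv_mul (a : B) : -a = a⁻¹ * -(SkewBrace.star a a) := by
  rw [← neg_mul_self, ← mul_assoc, inv_mul_cancel, one_mul]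

lemma cocycle (z u v : B) : lam z (u * v) = lam z u * lam ((lam z u)⁻¹ * z * u) v := by
  conv_lhs => rw [mul_eq u v, lam_add, lam_comp]
  rw [mul_eq (lam z u), lam_comp, ← mul_assoc, mul_inv_cancel_left]

lemma inv_eq (x : B) : x⁻¹ = -x + -(SkewBrace.star x⁻¹ x) := by
  have h : SkewBrace.star x⁻¹ x + x = -x⁻¹ := by
    have h0 := lam_self_inv x⁻¹
    rw [inv_inv] at h0
    rw [← lam_eq_star, h0]
  have h2 := congrArg Neg.neg h
  rw [neg_add_rev, neg_neg] at h2
  exact h2.symm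


/-! ### The subgroup `A = B*B` -/

lemma star_mem_A (a b : B) : SkewBrace.star a b ∈ starSquare B :=
  AddSubgroup.subset_closure ⟨a, b, rfl⟩

lemma lam_star_eq (a b c : B) :
    lam a (SkewBrace.star b c) = SkewBrace.star (a * b) c + -(SkewBrace.star a c) := by
  have h : SkewBrace.star (a * b) c = lam a (SkewBrace.star b c) + SkewBrace.star a c := by
    rw [star_eq (a*b) c, ← lam_comp, lam_eq_star b c, lam_add, star_eq a c]
    simp only [add_assoc]
  rw [h, add_neg_cancel_right]

lemma lam_mem_A (z : B) {x : B} (hx : x ∈ starSquare B) : lam z x ∈ starSquare B := by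
  induction hx using AddSubgroup.closure_induction with
  | mem y hy =>
    obtain ⟨a, b, rfl⟩ := hy
    rw [lam_star_eq]
    exact add_mem (star_mem_A _ _) (neg_mem (star_mem_A _ _))
  | zero => rw [lam_zero]; exact zero_mem _
  | add u v _ _ hu hv => rw [lam_add]; exact add_mem hu hv
  | neg u _ hu => rw [lam_neg]; exact neg_mem hu

lemma one_mem_A : (1 : B) ∈ starSquare B := zero_eq_one (B := B) ▸ zero_mem _

lemma mul_mem_A {x y : B} (hx : x ∈ starSquare B) (hy : y ∈ starSquare B) :
    x * y ∈ starSquare B := by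
  rw [mul_eq, lam_eq_star]
  exact add_mem hx (add_mem (star_mem_A _ _) hy)

lemma inv_mem_A {x : B} (hx : x ∈ starSquare B) : x⁻¹ ∈ starSquare B := by
  rw [inv_eq]
  exact add_mem (neg_mem hx) (neg_mem (star_mem_A _ _))

/-! ### The subgroup `D = [B,B]_mult` -/

lemma comm_mem_D (x y : B) : x * y * x⁻¹ * y⁻¹ ∈ mulCommutator B :=
  Subgroup.subset_closure ⟨x, y, rfl⟩

lemma conj_mem_D (z : B) {d : B} (hd : d ∈ mulCommutator B) :
    z * d * z⁻¹ ∈ mulCommutator B := by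
  induction hd using Subgroup.closure_induction with
  | mem y hy =>
    obtain ⟨a, b, rfl⟩ := hy
    have : z * (a * b * a⁻¹ * b⁻¹) * z⁻¹
        = (z*a*z⁻¹) * (z*b*z⁻¹) * (z*a*z⁻¹)⁻¹ * (z*b*z⁻¹)⁻¹ := by group
    rw [this]; exact comm_mem_D _ _
  | one => rw [mul_one, mul_inv_cancel]; exact one_mem _
  | mul u v _ _ hu hv =>
    have : z * (u * v) * z⁻¹ = (z * u * z⁻¹) * (z * v * z⁻¹) := by group
    rw [this]; exact mul_mem hu hv
  | inv u _ hu =>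
    have : z * u⁻¹ * z⁻¹ = (z * u * z⁻¹)⁻¹ := by group
    rw [this]; exact inv_mem hu

/-! ### The set `M = A · D` -/

def Mset (B : Type*) [SkewBrace B] : Set B :=
  {x : B | ∃ s ∈ starSquare B, ∃ c ∈ mulCommutator B, x = s * c}

lemma memM_of {s d : B} (hs : s ∈ starSquare B) (hd : d ∈ mulCommutator B) :
    s * d ∈ Mset B := ⟨s, hs, d, hd, rfl⟩

lemma A_sub_M {a : B} (ha : a ∈ starSquare B) : a ∈ Mset B :=
  ⟨a, ha, 1, one_mem _, (mul_one a).symm⟩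

lemma D_sub_M {d : B} (hd : d ∈ mulCommutator B) : d ∈ Mset B :=
  ⟨1, one_mem_A, d, hd, (one_mul d).symm⟩

lemma one_mem_M : (1 : B) ∈ Mset B := A_sub_M one_mem_A

lemma zero_mem_M : (0 : B) ∈ Mset B := A_sub_M (zero_mem _)

lemma mulconjA_mem_M (z : B) {a : B} (ha : a ∈ starSquare B) : z * a * z⁻¹ ∈ Mset B := by
  have h : z * a * z⁻¹ = a * (a⁻¹ * z * a * z⁻¹) := by group
  have hd : a⁻¹ * z * a * z⁻¹ ∈ mulCommutator B := by
    have := comm_mem_D a⁻¹ z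
    rwa [inv_inv] at this
  rw [h]; exact memM_of ha hd

lemma M_mul_A {m a : B} (hm : m ∈ Mset B) (ha : a ∈ starSquare B) : m * a ∈ Mset B := by
  obtain ⟨s, hs, d, hd, rfl⟩ := hm
  obtain ⟨s', hs', d', hd', hconj⟩ := mulconjA_mem_M d ha
  have h : s * d * a = s * s' * (d' * d) := by
    have h2 : s * s' * (d' * d) = s * (s' * d') * d := by group
    rw [h2, ← hconj]; group
  rw [h]
  exact memM_of (mul_mem_A hs hs') (mul_mem hd' hd)

lemma A_mul_M {a m : B} (ha : a ∈ starSquare B) (hm : m ∈ Mset B) : a * m ∈ Mset B := by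
  obtain ⟨s, hs, d, hd, rfl⟩ := hm
  rw [← mul_assoc]
  exact memM_of (mul_mem_A ha hs) hd

lemma M_mul_D {m d' : B} (hm : m ∈ Mset B) (hd' : d' ∈ mulCommutator B) :
    m * d' ∈ Mset B := by
  obtain ⟨s, hs, d, hd, rfl⟩ := hm
  rw [mul_assoc]
  exact memM_of hs (mul_mem hd hd')

lemma M_mul_M {m m' : B} (hm : m ∈ Mset B) (hm' : m' ∈ Mset B) : m * m' ∈ Mset B := by
  obtain ⟨s, hs, d, hd, rfl⟩ := hm'
  rw [← mul_assoc]
  exact M_mul_D (M_mul_A hm hs) hd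

lemma inv_mem_M {m : B} (hm : m ∈ Mset B) : m⁻¹ ∈ Mset B := by
  obtain ⟨s, hs, d, hd, rfl⟩ := hm
  have h : (s * d)⁻¹ = s⁻¹ * (s * d⁻¹ * s⁻¹) := by group
  rw [h]
  exact A_mul_M (inv_mem_A hs) (D_sub_M (conj_mem_D s (inv_mem hd)))

lemma mulconjM_mem_M (z : B) {m : B} (hm : m ∈ Mset B) : z * m * z⁻¹ ∈ Mset B := by
  obtain ⟨s, hs, d, hd, rfl⟩ := hm
  have h : z * (s * d) * z⁻¹ = (z * s * z⁻¹) * (z * d * z⁻¹) := by group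
  rw [h]
  exact M_mul_D (mulconjA_mem_M z hs) (conj_mem_D z hd)


/-! ### The subtraction workhorse and conjugates -/

lemma sub_eq' (u v : B) :
    u + -v = (u * -v) * lam (-v)⁻¹ (-(SkewBrace.star u⁻¹ v)) := by
  rw [add_eq_mul_lam u (-v), lam_neg, neg_lam_eq, add_eq_mul_lam (-v), mul_assoc]

lemma sub_mem_M {u v : B} (h : u * v⁻¹ ∈ Mset B) : u + -v ∈ Mset B := by
  rw [sub_eq']
  have h2 : u * -v ∈ Mset B := by
    rw [neg_eq_inv_mul v, ← mul_assoc]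
    exact M_mul_A h (neg_mem (star_mem_A _ _))
  exact M_mul_A h2 (lam_mem_A _ (neg_mem (star_mem_A _ _)))

lemma conjA_mem_M {p a : B} (ha : a ∈ starSquare B) : p + a + -p ∈ Mset B := by
  rw [add_eq_mul_lam p a]
  apply sub_mem_M
  exact mulconjM_mem_M p (A_sub_M (lam_mem_A _ ha))

/-! ### The additive normal closure `N` -/

def conjSet (B : Type*) [SkewBrace B] : Set B :=
  {x : B | ∃ p : B, ∃ a ∈ starSquare B, x = p + a + -p}

def Nsub (B : Type*) [SkewBrace B] : AddSubgroup B := AddSubgroup.closure (conjSet B)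

lemma A_sub_N {a : B} (ha : a ∈ starSquare B) : a ∈ Nsub B :=
  AddSubgroup.subset_closure ⟨0, a, ha, by rw [zero_add, neg_zero, add_zero]⟩

lemma lam_N (z : B) {n : B} (hn : n ∈ Nsub B) : lam z n ∈ Nsub B := by
  induction hn using AddSubgroup.closure_induction with
  | mem x hx =>
    obtain ⟨p, a, ha, rfl⟩ := hx
    rw [lam_add, lam_add, lam_neg]
    exact AddSubgroup.subset_closure ⟨lam z p, lam z a, lam_mem_A _ ha, rfl⟩
  | zero => rw [lam_zero]; exact zero_mem _
  | add u v _ _ hu hv => rw [lam_add]; exact add_mem hu hv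
  | neg u _ hu => rw [lam_neg]; exact neg_mem hu

lemma conj_mem_N (p : B) {t : B} (ht : t ∈ Nsub B) : p + t + -p ∈ Nsub B := by
  induction ht using AddSubgroup.closure_induction with
  | mem x hx =>
    obtain ⟨q, a, ha, rfl⟩ := hx
    have h : p + (q + a + -q) + -p = p + q + a + -(p + q) := by
      simp only [neg_add_rev, add_assoc]
    rw [h]
    exact AddSubgroup.subset_closure ⟨p + q, a, ha, rfl⟩
  | zero => rw [add_zero, add_neg_cancel]; exact zero_mem _
  | add u v _ _ hu hv =>
    have h : p + (u + v) + -p = (p + u + -p) + (p + v + -p) := by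
      simp only [add_assoc, neg_add_cancel_left]
    rw [h]; exact add_mem hu hv
  | neg u _ hu =>
    have h : p + -u + -p = -(p + u + -p) := by
      simp only [neg_add_rev, neg_neg, add_assoc]
    rw [h]; exact neg_mem hu

lemma lam_N_mul_mem {n : B} (hn : n ∈ Nsub B) :
    ∀ z : B, ∀ m ∈ Mset B, lam z n * m ∈ Mset B := by
  induction hn using AddSubgroup.closure_induction with
  | mem x hx =>
    intro z m hm
    obtain ⟨p, a, ha, rfl⟩ := hx
    have h : lam z (p + a + -p) ∈ Mset B := by
      rw [lam_add, lam_add, lam_neg]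
      exact conjA_mem_M (lam_mem_A _ ha)
    exact M_mul_M h hm
  | zero =>
    intro z m hm
    rw [lam_zero, zero_eq_one, one_mul]; exact hm
  | add u v _ _ hu hv =>
    intro z m hm
    rw [lam_add, add_eq_mul_lam (lam z u) (lam z v), lam_comp, mul_assoc]
    exact hu z _ (hv _ m hm)
  | neg u _ hu =>
    intro z m hm
    have hq : lam z u ∈ Mset B := by
      have := hu z 1 one_mem_M
      rwa [mul_one] at this
    rw [lam_neg, neg_eq_inv_mul (lam z u), mul_assoc]
    exact M_mul_M (inv_mem_M hq) (A_mul_M (neg_mem (star_mem_A _ _)) hm)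

lemma N_mul_M {n m : B} (hn : n ∈ Nsub B) (hm : m ∈ Mset B) : n * m ∈ Mset B := by
  have := lam_N_mul_mem hn 1 m hm
  rwa [lam_one_id] at this

lemma N_sub_M {n : B} (hn : n ∈ Nsub B) : n ∈ Mset B := by
  have := N_mul_M hn one_mem_M
  rwa [mul_one] at this

lemma mulconj_N (z : B) {n : B} (hn : n ∈ Nsub B) : z * n * z⁻¹ ∈ Nsub B := by
  have e1 : z * n * z⁻¹ = z + (lam z n + (lam z (SkewBrace.star n z⁻¹) + -z)) := by
    rw [mul_assoc, mul_eq z (n * z⁻¹), mul_eq n z⁻¹, lam_add, lam_eq_star n z⁻¹,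
      lam_add, lam_self_inv]
  have e2 : (z + lam z n + -z) + (z + lam z (SkewBrace.star n z⁻¹) + -z)
      = z + (lam z n + (lam z (SkewBrace.star n z⁻¹) + -z)) := by
    simp only [add_assoc, neg_add_cancel_left]
  rw [e1, ← e2]
  exact add_mem (conj_mem_N z (lam_N z hn))
    (AddSubgroup.subset_closure ⟨z, lam z (SkewBrace.star n z⁻¹),
      lam_mem_A _ (star_mem_A _ _), rfl⟩)

/-! ### `lam` preserves `M`; `M` is an additive subgroup -/

lemma lam_D_mem_M (z : B) {d : B} (hd : d ∈ mulCommutator B) : lam z d ∈ Mset B := by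
  have hn0 : -d + SkewBrace.star z d + d ∈ Nsub B :=
    AddSubgroup.subset_closure ⟨-d, SkewBrace.star z d, star_mem_A _ _, by rw [neg_neg]⟩
  have e : lam z d = d + (-d + SkewBrace.star z d + d) := by
    rw [lam_eq_star]
    simp only [add_assoc, add_neg_cancel_left]
  rw [e, add_eq_mul_lam d]
  have h2 : d * lam d⁻¹ (-d + SkewBrace.star z d + d)
      = (d * lam d⁻¹ (-d + SkewBrace.star z d + d) * d⁻¹) * d := by group
  rw [h2]
  exact N_mul_M (mulconj_N d (lam_N d⁻¹ hn0)) (D_sub_M hd)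

lemma lam_M (z : B) {m : B} (hm : m ∈ Mset B) : lam z m ∈ Mset B := by
  obtain ⟨s, hs, d, hd, rfl⟩ := hm
  rw [cocycle]
  exact A_mul_M (lam_mem_A _ hs) (lam_D_mem_M _ hd)

lemma add_M {m m' : B} (hm : m ∈ Mset B) (hm' : m' ∈ Mset B) : m + m' ∈ Mset B := by
  rw [add_eq_mul_lam]
  exact M_mul_M hm (lam_M _ hm')

lemma neg_M {m : B} (hm : m ∈ Mset B) : -m ∈ Mset B := by
  rw [neg_eq_inv_mul]
  exact M_mul_A (inv_mem_M hm) (neg_mem (star_mem_A _ _))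

lemma addconj_M (p : B) {m : B} (hm : m ∈ Mset B) : p + m + -p ∈ Mset B := by
  rw [add_eq_mul_lam p m]
  exact sub_mem_M (mulconjM_mem_M p (lam_M _ hm))

lemma star_left_M (z : B) {m : B} (hm : m ∈ Mset B) : SkewBrace.star z m ∈ Mset B := by
  rw [star_eq]
  exact add_M (lam_M z hm) (neg_M hm)

lemma star_right_M (m b : B) : SkewBrace.star m b ∈ Mset B := A_sub_M (star_mem_A m b)


/-! ### Generators lie in `M` -/

lemma thirdgen_eq (a b : B) : a * b + -(a + b) = a + SkewBrace.star a b + -a := by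
  rw [mul_eq a b, lam_eq_star, neg_add_rev]
  simp only [add_assoc, add_neg_cancel_left]

lemma thirdgen_mem_M (a b : B) : a * b + -(a + b) ∈ Mset B := by
  rw [thirdgen_eq]; exact conjA_mem_M (star_mem_A a b)

lemma n3_eq (a b : B) :
    -(a * b) + (a + b) = -b + -(SkewBrace.star a b) + -(-b) := by
  rw [neg_neg, mul_eq a b, lam_eq_star, neg_add_rev, neg_add_rev]
  simp only [add_assoc, neg_add_cancel_left]

lemma n3_mem_N (a b : B) : -(a * b) + (a + b) ∈ Nsub B := by
  rw [n3_eq]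
  exact AddSubgroup.subset_closure
    ⟨-b, -(SkewBrace.star a b), neg_mem (star_mem_A a b), rfl⟩

lemma kappa_eq (a b : B) : a + b + -a + -b
    = (a * b + ((-(a * b) + (a + b)) + -(-(b * a) + (b + a))) + -(a * b))
      + (a * b + -(b * a)) := by
  simp only [neg_add_rev, neg_neg, add_assoc, neg_add_cancel_left, add_neg_cancel_left,
    add_neg_cancel, neg_add_cancel, add_zero, zero_add]

lemma addcomm_mem_M (a b : B) : a + b + -a + -b ∈ Mset B := by
  rw [kappa_eq]
  apply add_M
  · exact addconj_M _ (N_sub_M (add_mem (n3_mem_N a b) (neg_mem (n3_mem_N b a))))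
  · apply sub_mem_M
    have h : a * b * (b * a)⁻¹ = a * b * a⁻¹ * b⁻¹ := by group
    rw [h]; exact D_sub_M (comm_mem_D a b)

lemma gens_sub_M : commutatorGens B ⊆ Mset B := by
  rintro x ⟨a, b, h | h | h⟩ <;> subst h
  · exact addcomm_mem_M a b
  · exact D_sub_M (comm_mem_D a b)
  · exact thirdgen_mem_M a b

lemma ideal_M : SkewBrace.IsIdeal (Mset B) :=
  ⟨⟨⟨⟨⟨zero_mem_M, fun a ha b hb => add_M ha hb, fun a ha => neg_M ha⟩,
      ⟨one_mem_M, fun a ha b hb => M_mul_M ha hb, fun a ha => inv_mem_M ha⟩⟩,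
      fun b a ha => star_left_M b ha⟩,
    fun b a ha => addconj_M b ha⟩,
    fun a _ b => star_right_M a b⟩

lemma star_eq_conj_gen (a b : B) :
    SkewBrace.star a b = -a + (a * b + -(a + b)) + -(-a) := by
  rw [neg_neg, thirdgen_eq]
  simp only [add_assoc, neg_add_cancel, add_zero, neg_add_cancel_left]

lemma min_M {I : Set B} (hI : SkewBrace.IsIdeal I) (hg : commutatorGens B ⊆ I) :
    Mset B ⊆ I := by
  obtain ⟨⟨⟨⟨⟨h0, hadd, hneg⟩, h1, hmul, hinv⟩, _hls⟩, hnorm⟩, _hrs⟩ := hI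
  have hstar : ∀ a b : B, SkewBrace.star a b ∈ I := by
    intro a b
    rw [star_eq_conj_gen]
    exact hnorm (-a) _ (hg ⟨a, b, Or.inr (Or.inr rfl)⟩)
  have hA : ∀ a ∈ starSquare B, a ∈ I := by
    intro a ha
    induction ha using AddSubgroup.closure_induction with
    | mem x hx => obtain ⟨u, v, rfl⟩ := hx; exact hstar u v
    | zero => exact h0
    | add u v _ _ hu hv => exact hadd u hu v hv
    | neg u _ hu => exact hneg u hu
  have hD : ∀ d ∈ mulCommutator B, d ∈ I := by
    intro d hd
    induction hd using Subgroup.closure_induction with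
    | mem x hx => obtain ⟨u, v, rfl⟩ := hx; exact hg ⟨u, v, Or.inr (Or.inl rfl)⟩
    | one => exact h1
    | mul u v _ _ hu hv => exact hmul u hu v hv
    | inv u _ hu => exact hinv u hu
  rintro x ⟨s, hs, d, hd, rfl⟩
  exact hmul s (hA s hs) d (hD d hd)

lemma commutatorIdeal_eq_M : commutatorIdeal B = Mset B := by
  apply Set.Subset.antisymm
  · intro x hx
    exact Set.mem_sInter.mp hx (Mset B) ⟨ideal_M, gens_sub_M⟩
  · intro x hx
    apply Set.mem_sInter.mpr
    rintro I ⟨hI, hg⟩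
    exact min_M hI hg hx

/-! ### The additive description `A + C` -/

def T1set (B : Type*) [SkewBrace B] : Set B :=
  {x : B | ∃ s ∈ starSquare B, ∃ c ∈ SkewBrace.addCommutator B, x = s + c}

lemma C_sub_M {c : B} (hc : c ∈ SkewBrace.addCommutator B) : c ∈ Mset B := by
  induction hc using AddSubgroup.closure_induction with
  | mem x hx => obtain ⟨u, v, rfl⟩ := hx; exact addcomm_mem_M u v
  | zero => exact zero_mem_M
  | add u v _ _ hu hv => exact add_M hu hv
  | neg u _ hu => exact neg_M hu

lemma T1_sub_M {x : B} (hx : x ∈ T1set B) : x ∈ Mset B := by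
  obtain ⟨s, hs, c, hc, rfl⟩ := hx
  exact add_M (A_sub_M hs) (C_sub_M hc)

lemma conj_mem_C (p : B) {c : B} (hc : c ∈ SkewBrace.addCommutator B) :
    p + c + -p ∈ SkewBrace.addCommutator B := by
  have h : p + c + -p = c + (-c + p + -(-c) + -p) := by
    rw [neg_neg]
    simp only [add_assoc, add_neg_cancel_left]
  rw [h]
  exact add_mem hc (AddSubgroup.subset_closure ⟨-c, p, rfl⟩)

lemma lam_C (z : B) {c : B} (hc : c ∈ SkewBrace.addCommutator B) : lam z c ∈ SkewBrace.addCommutator B := by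
  induction hc using AddSubgroup.closure_induction with
  | mem x hx =>
    obtain ⟨u, v, rfl⟩ := hx
    rw [lam_add, lam_add, lam_add, lam_neg, lam_neg]
    exact AddSubgroup.subset_closure ⟨lam z u, lam z v, rfl⟩
  | zero => rw [lam_zero]; exact zero_mem _
  | add u v _ _ hu hv => rw [lam_add]; exact add_mem hu hv
  | neg u _ hu => rw [lam_neg]; exact neg_mem hu

lemma T1_mem {s c : B} (hs : s ∈ starSquare B) (hc : c ∈ SkewBrace.addCommutator B) :
    s + c ∈ T1set B := ⟨s, hs, c, hc, rfl⟩

lemma A_sub_T1 {a : B} (ha : a ∈ starSquare B) : a ∈ T1set B :=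
  ⟨a, ha, 0, zero_mem _, (add_zero a).symm⟩

lemma C_sub_T1 {c : B} (hc : c ∈ SkewBrace.addCommutator B) : c ∈ T1set B :=
  ⟨0, zero_mem _, c, hc, (zero_add c).symm⟩

lemma T1_add {x y : B} (hx : x ∈ T1set B) (hy : y ∈ T1set B) : x + y ∈ T1set B := by
  obtain ⟨s, hs, c, hc, rfl⟩ := hx
  obtain ⟨s', hs', c', hc', rfl⟩ := hy
  have h : s + c + (s' + c') = (s + s') + (-s' + c + s' + c') := by
    simp only [add_assoc, add_neg_cancel_left]
  have hconj : -s' + c + s' ∈ SkewBrace.addCommutator B := by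
    have := conj_mem_C (-s') hc
    rwa [neg_neg] at this
  rw [h]
  exact T1_mem (add_mem hs hs') (add_mem hconj hc')

lemma T1_neg {x : B} (hx : x ∈ T1set B) : -x ∈ T1set B := by
  obtain ⟨s, hs, c, hc, rfl⟩ := hx
  have h : -(s + c) = -s + (s + -c + -s) := by
    simp only [neg_add_rev, add_assoc, neg_add_cancel_left]
  rw [h]
  exact T1_mem (neg_mem hs) (conj_mem_C s (neg_mem hc))

lemma lam_T1 (z : B) {x : B} (hx : x ∈ T1set B) : lam z x ∈ T1set B := by
  obtain ⟨s, hs, c, hc, rfl⟩ := hx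
  rw [lam_add]
  exact T1_mem (lam_mem_A _ hs) (lam_C _ hc)

lemma T1_mul {x y : B} (hx : x ∈ T1set B) (hy : y ∈ T1set B) : x * y ∈ T1set B := by
  rw [mul_eq]
  exact T1_add hx (lam_T1 x hy)

lemma T1_inv {x : B} (hx : x ∈ T1set B) : x⁻¹ ∈ T1set B := by
  rw [inv_eq]
  exact T1_add (T1_neg hx) (A_sub_T1 (neg_mem (star_mem_A _ _)))

lemma T1_one : (1 : B) ∈ T1set B := ⟨0, zero_mem _, 0, zero_mem _, by
  rw [add_zero]; exact zero_eq_one.symm⟩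

lemma conjA_T1 {p a : B} (ha : a ∈ starSquare B) : p + a + -p ∈ T1set B := by
  have h : p + a + -p = a + (-a + p + -(-a) + -p) := by
    rw [neg_neg]
    simp only [add_assoc, add_neg_cancel_left]
  exact ⟨a, ha, _, AddSubgroup.subset_closure ⟨-a, p, rfl⟩, h⟩

lemma abminusba_T1 (u v : B) : u * v + -(v * u) ∈ T1set B := by
  have h : u * v + -(v * u)
      = (u + SkewBrace.star u v + -u) + (u + v + -u + -v)
        + (v + -(SkewBrace.star v u) + -v) := by
    rw [mul_eq u v, lam_eq_star, mul_eq v u, lam_eq_star, neg_add_rev, neg_add_rev]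
    simp only [add_assoc, neg_add_cancel_left, add_neg_cancel_left]
  rw [h]
  exact T1_add (T1_add (conjA_T1 (star_mem_A u v))
    (C_sub_T1 (AddSubgroup.subset_closure ⟨u, v, rfl⟩)))
    (conjA_T1 (neg_mem (star_mem_A v u)))

lemma D_sub_T1 {d : B} (hd : d ∈ mulCommutator B) : d ∈ T1set B := by
  induction hd using Subgroup.closure_induction with
  | mem x hx =>
    obtain ⟨u, v, rfl⟩ := hx
    have h1 : u * v + -(v * u)
        = (u * v * u⁻¹ * v⁻¹ * -(SkewBrace.star (v * u) (v * u)))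
          * lam (-(v * u))⁻¹ (-(SkewBrace.star (u * v)⁻¹ (v * u))) := by
      rw [sub_eq' (u * v) (v * u), neg_eq_inv_mul (v * u), ← mul_assoc]
      have h2 : u * v * (v * u)⁻¹ = u * v * u⁻¹ * v⁻¹ := by group
      rw [h2]
    have h3 : u * v * u⁻¹ * v⁻¹
        = ((u * v + -(v * u)) * (lam (-(v * u))⁻¹ (-(SkewBrace.star (u * v)⁻¹ (v * u))))⁻¹)
          * (-(SkewBrace.star (v * u) (v * u)))⁻¹ := by
      rw [h1]; group
    rw [h3]
    exact T1_mul (T1_mul (abminusba_T1 u v)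
      (T1_inv (A_sub_T1 (lam_mem_A _ (neg_mem (star_mem_A _ _))))))
      (T1_inv (A_sub_T1 (neg_mem (star_mem_A _ _))))
  | one => exact T1_one
  | mul u v _ _ hu hv => exact T1_mul hu hv
  | inv u _ hu => exact T1_inv hu

lemma M_sub_T1 {x : B} (hx : x ∈ Mset B) : x ∈ T1set B := by
  obtain ⟨s, hs, d, hd, rfl⟩ := hx
  exact T1_mul (A_sub_T1 hs) (D_sub_T1 hd)

lemma commutatorIdeal_eq_T1 : commutatorIdeal B = T1set B :=
  commutatorIdeal_eq_M.trans
    (Set.Subset.antisymm (fun _ hx => M_sub_T1 hx) (fun _ hx => T1_sub_M hx))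

end SkewBraceAux

open SkewBrace in
/-- `[B,B]^B = B*B + [B,B]₊ = (B*B)·[B,B]_•`. -/
theorem commutatorIdeal_eq {B : Type*} [SkewBrace B] :
    commutatorIdeal B =
      {x : B | ∃ s ∈ starSquare B, ∃ c ∈ SkewBrace.addCommutator B, x = s + c} ∧
    commutatorIdeal B =
      {x : B | ∃ s ∈ starSquare B, ∃ c ∈ mulCommutator B, x = s * c} :=
  ⟨SkewBraceAux.commutatorIdeal_eq_T1, SkewBraceAux.commutatorIdeal_eq_M⟩
end

section
/- Let G be a group, K a normal subgroup, and E, H subgroups with G = KE = KH = HE and K ∩ E = H ∩ E = 1. Suppose L₁, L₂ are subgroups of K and E₁, E₂ subgroups of E with K = L₁L₂, E = E₁E₂, [E₁,L₁] = 1 and [E₂,L₂] = 1. Then the commutators [E₁,L₂] and [E₂,L₁] are normal subgroups of G and [E,K] = [E₁,L₂][E₂,L₁]. -/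
open Pointwise
open scoped commutatorElement

private lemma conj_gen_closed {G : Type*} [Group G] (A B : Subgroup G) (g : G)
    (h : ∀ a ∈ A, ∀ b ∈ B, g * ⁅a, b⁆ * g⁻¹ ∈ ⁅A, B⁆) :
    ∀ x ∈ ⁅A, B⁆, g * x * g⁻¹ ∈ ⁅A, B⁆ := by
  intro x hx
  have hmap : (⁅A, B⁆).map (MulAut.conj g).toMonoidHom ≤ ⁅A, B⁆ := by
    rw [Subgroup.map_commutator, Subgroup.commutator_le]
    rintro _ ⟨a, ha, rfl⟩ _ ⟨b, hb, rfl⟩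
    have := h a ha b hb
    rw [← map_commutatorElement]
    exact this
  exact hmap ⟨x, hx, rfl⟩

private lemma comm_mul_left_eq {G : Type*} [Group G] {a c : G} (b : G) (h : ⁅a, c⁆ = 1) :
    ⁅b * a, c⁆ = ⁅b, c⁆ := by
  have : ⁅b * a, c⁆ = b * ⁅a, c⁆ * b⁻¹ * ⁅b, c⁆ := by group
  rw [this, h]; group

private lemma comm_mul_right_eq {G : Type*} [Group G] {a c : G} (b : G) (h : ⁅a, c⁆ = 1) :
    ⁅a, b * c⁆ = ⁅a, b⁆ := by
  have : ⁅a, b * c⁆ = ⁅a, b⁆ * (b * ⁅a, c⁆ * b⁻¹) := by group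
  rw [this, h]; group

/-- In a trifactorised group `(G,K,H,E)` with `K = L₁L₂`, `E = E₁E₂`,
`[E₁,L₁] = 1` and `[E₂,L₂] = 1`, the commutators `[E₁,L₂]` and `[E₂,L₁]`
are normal in `G` and `[E,K] = [E₁,L₂][E₂,L₁]`. -/
theorem commutator_factorisation {G : Type*} [Group G]
    (K H E : Subgroup G) [K.Normal]
    (hKE : (↑K * ↑E : Set G) = Set.univ) (hKH : (↑K * ↑H : Set G) = Set.univ)
    (hHE : (↑H * ↑E : Set G) = Set.univ)
    (hKEt : K ⊓ E = ⊥) (hHEt : H ⊓ E = ⊥)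
    (L₁ L₂ E₁ E₂ : Subgroup G)
    (hL₁ : L₁ ≤ K) (hL₂ : L₂ ≤ K) (hE₁ : E₁ ≤ E) (hE₂ : E₂ ≤ E)
    (hK : (↑L₁ * ↑L₂ : Set G) = (↑K : Set G))
    (hE : (↑E₁ * ↑E₂ : Set G) = (↑E : Set G))
    (h1 : ⁅E₁, L₁⁆ = ⊥) (h2 : ⁅E₂, L₂⁆ = ⊥) :
    (⁅E₁, L₂⁆).Normal ∧ (⁅E₂, L₁⁆).Normal ∧
      (↑⁅E, K⁆ : Set G) = ↑⁅E₁, L₂⁆ * ↑⁅E₂, L₁⁆ := by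
  -- commutator-triviality facts
  have bot1 : ∀ {x y : G}, x ∈ E₁ → y ∈ L₁ → ⁅x, y⁆ = 1 := by
    intro x y hx hy
    have := Subgroup.commutator_mem_commutator hx hy
    rwa [h1, Subgroup.mem_bot] at this
  have bot2 : ∀ {x y : G}, x ∈ E₂ → y ∈ L₂ → ⁅x, y⁆ = 1 := by
    intro x y hx hy
    have := Subgroup.commutator_mem_commutator hx hy
    rwa [h2, Subgroup.mem_bot] at this
  -- decompositions
  have memKdec : ∀ k ∈ K, ∃ a ∈ L₁, ∃ b ∈ L₂, a * b = k := by
    intro k hk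
    have : k ∈ (↑L₁ * ↑L₂ : Set G) := by rw [hK]; exact hk
    exact Set.mem_mul.mp this
  have memKdec' : ∀ k ∈ K, ∃ b ∈ L₂, ∃ a ∈ L₁, b * a = k := by
    intro k hk
    obtain ⟨a, ha, b, hb, hab⟩ := memKdec k⁻¹ (inv_mem hk)
    exact ⟨b⁻¹, inv_mem hb, a⁻¹, inv_mem ha, by
      rw [← mul_inv_rev, hab, inv_inv]⟩
  have memEdec : ∀ e ∈ E, ∃ a ∈ E₁, ∃ b ∈ E₂, a * b = e := by
    intro e he
    have : e ∈ (↑E₁ * ↑E₂ : Set G) := by rw [hE]; exact he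
    exact Set.mem_mul.mp this
  have memEdec' : ∀ e ∈ E, ∃ b ∈ E₂, ∃ a ∈ E₁, b * a = e := by
    intro e he
    obtain ⟨a, ha, b, hb, hab⟩ := memEdec e⁻¹ (inv_mem he)
    exact ⟨b⁻¹, inv_mem hb, a⁻¹, inv_mem ha, by
      rw [← mul_inv_rev, hab, inv_inv]⟩
  -- ⁅E₁, K⁆ = ⁅E₁, L₂⁆
  have hAK : ⁅E₁, K⁆ = ⁅E₁, L₂⁆ := by
    refine le_antisymm (Subgroup.commutator_le.mpr ?_)
      (Subgroup.commutator_mono le_rfl hL₂)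
    intro e he k hk
    obtain ⟨b, hb, a, ha, rfl⟩ := memKdec' k hk
    rw [comm_mul_right_eq b (bot1 he ha)]
    exact Subgroup.commutator_mem_commutator he hb
  -- ⁅E₂, K⁆ = ⁅E₂, L₁⁆
  have hBK : ⁅E₂, K⁆ = ⁅E₂, L₁⁆ := by
    refine le_antisymm (Subgroup.commutator_le.mpr ?_)
      (Subgroup.commutator_mono le_rfl hL₁)
    intro e he k hk
    obtain ⟨a, ha, b, hb, rfl⟩ := memKdec k hk
    rw [comm_mul_right_eq a (bot2 he hb)]
    exact Subgroup.commutator_mem_commutator he ha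
  -- conjugation of generators of A := ⁅E₁, L₂⁆
  have genK_A : ∀ x ∈ K, ∀ e ∈ E₁, ∀ l ∈ L₂, x * ⁅e, l⁆ * x⁻¹ ∈ ⁅E₁, L₂⁆ := by
    intro x hx e he l hl
    have key : x * ⁅e, l⁆ * x⁻¹ = ⁅e, x⁆⁻¹ * ⁅e, x * l⁆ := by group
    rw [key, ← hAK]
    exact mul_mem (inv_mem (Subgroup.commutator_mem_commutator he hx))
      (Subgroup.commutator_mem_commutator he (mul_mem hx (hL₂ hl)))
  have genE₁_A : ∀ u ∈ E₁, ∀ e ∈ E₁, ∀ l ∈ L₂, u * ⁅e, l⁆ * u⁻¹ ∈ ⁅E₁, L₂⁆ := by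
    intro u hu e he l hl
    have key : u * ⁅e, l⁆ * u⁻¹ = ⁅u * e, l⁆ * ⁅u, l⁆⁻¹ := by group
    rw [key]
    exact mul_mem (Subgroup.commutator_mem_commutator (mul_mem hu he) hl)
      (inv_mem (Subgroup.commutator_mem_commutator hu hl))
  have genE₂_A : ∀ u ∈ E₂, ∀ e ∈ E₁, ∀ l ∈ L₂, u * ⁅e, l⁆ * u⁻¹ ∈ ⁅E₁, L₂⁆ := by
    intro u hu e he l hl
    have hc : u * l = l * u := commutatorElement_eq_one_iff_mul_comm.mp (bot2 hu hl)
    have e1 : u * ⁅e, l⁆ * u⁻¹ = ⁅u * e * u⁻¹, u * l * u⁻¹⁆ := by group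
    have e2 : u * l * u⁻¹ = l := by rw [hc, mul_inv_cancel_right]
    have hw : u * e * u⁻¹ ∈ E := mul_mem (mul_mem (hE₂ hu) (hE₁ he)) (inv_mem (hE₂ hu))
    obtain ⟨f₁, hf₁, f₂, hf₂, hw'⟩ := memEdec _ hw
    rw [e1, e2, ← hw', comm_mul_left_eq f₁ (bot2 hf₂ hl)]
    exact Subgroup.commutator_mem_commutator hf₁ hl
  -- conjugation of generators of B := ⁅E₂, L₁⁆
  have genK_B : ∀ x ∈ K, ∀ e ∈ E₂, ∀ l ∈ L₁, x * ⁅e, l⁆ * x⁻¹ ∈ ⁅E₂, L₁⁆ := by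
    intro x hx e he l hl
    have key : x * ⁅e, l⁆ * x⁻¹ = ⁅e, x⁆⁻¹ * ⁅e, x * l⁆ := by group
    rw [key, ← hBK]
    exact mul_mem (inv_mem (Subgroup.commutator_mem_commutator he hx))
      (Subgroup.commutator_mem_commutator he (mul_mem hx (hL₁ hl)))
  have genE₂_B : ∀ u ∈ E₂, ∀ e ∈ E₂, ∀ l ∈ L₁, u * ⁅e, l⁆ * u⁻¹ ∈ ⁅E₂, L₁⁆ := by
    intro u hu e he l hl
    have key : u * ⁅e, l⁆ * u⁻¹ = ⁅u * e, l⁆ * ⁅u, l⁆⁻¹ := by group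
    rw [key]
    exact mul_mem (Subgroup.commutator_mem_commutator (mul_mem hu he) hl)
      (inv_mem (Subgroup.commutator_mem_commutator hu hl))
  have genE₁_B : ∀ u ∈ E₁, ∀ e ∈ E₂, ∀ l ∈ L₁, u * ⁅e, l⁆ * u⁻¹ ∈ ⁅E₂, L₁⁆ := by
    intro u hu e he l hl
    have hc : u * l = l * u := commutatorElement_eq_one_iff_mul_comm.mp (bot1 hu hl)
    have e1 : u * ⁅e, l⁆ * u⁻¹ = ⁅u * e * u⁻¹, u * l * u⁻¹⁆ := by group
    have e2 : u * l * u⁻¹ = l := by rw [hc, mul_inv_cancel_right]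
    have hw : u * e * u⁻¹ ∈ E := mul_mem (mul_mem (hE₁ hu) (hE₂ he)) (inv_mem (hE₁ hu))
    obtain ⟨f₂, hf₂, f₁, hf₁, hw'⟩ := memEdec' _ hw
    rw [e1, e2, ← hw', comm_mul_left_eq f₂ (bot1 hf₁ hl)]
    exact Subgroup.commutator_mem_commutator hf₂ hl
  -- normality of A
  have normA : (⁅E₁, L₂⁆).Normal := by
    constructor
    intro n hn g
    have hg : g ∈ (↑K * ↑E : Set G) := by rw [hKE]; exact Set.mem_univ g
    obtain ⟨k, hk, e, he, rfl⟩ := Set.mem_mul.mp hg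
    obtain ⟨f₁, hf₁, f₂, hf₂, hfe⟩ := memEdec e he
    subst hfe
    have step2 : f₂ * n * f₂⁻¹ ∈ ⁅E₁, L₂⁆ :=
      conj_gen_closed E₁ L₂ f₂ (fun a ha b hb => genE₂_A f₂ hf₂ a ha b hb) n hn
    have step1 : f₁ * (f₂ * n * f₂⁻¹) * f₁⁻¹ ∈ ⁅E₁, L₂⁆ :=
      conj_gen_closed E₁ L₂ f₁ (fun a ha b hb => genE₁_A f₁ hf₁ a ha b hb) _ step2
    have step0 : k * (f₁ * (f₂ * n * f₂⁻¹) * f₁⁻¹) * k⁻¹ ∈ ⁅E₁, L₂⁆ :=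
      conj_gen_closed E₁ L₂ k (fun a ha b hb => genK_A k hk a ha b hb) _ step1
    have : k * (f₁ * f₂) * n * (k * (f₁ * f₂))⁻¹
        = k * (f₁ * (f₂ * n * f₂⁻¹) * f₁⁻¹) * k⁻¹ := by group
    rw [this]
    exact step0
  -- normality of B
  have normB : (⁅E₂, L₁⁆).Normal := by
    constructor
    intro n hn g
    have hg : g ∈ (↑K * ↑E : Set G) := by rw [hKE]; exact Set.mem_univ g
    obtain ⟨k, hk, e, he, rfl⟩ := Set.mem_mul.mp hg
    obtain ⟨f₁, hf₁, f₂, hf₂, hfe⟩ := memEdec e he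
    subst hfe
    have step2 : f₂ * n * f₂⁻¹ ∈ ⁅E₂, L₁⁆ :=
      conj_gen_closed E₂ L₁ f₂ (fun a ha b hb => genE₂_B f₂ hf₂ a ha b hb) n hn
    have step1 : f₁ * (f₂ * n * f₂⁻¹) * f₁⁻¹ ∈ ⁅E₂, L₁⁆ :=
      conj_gen_closed E₂ L₁ f₁ (fun a ha b hb => genE₁_B f₁ hf₁ a ha b hb) _ step2
    have step0 : k * (f₁ * (f₂ * n * f₂⁻¹) * f₁⁻¹) * k⁻¹ ∈ ⁅E₂, L₁⁆ :=
      conj_gen_closed E₂ L₁ k (fun a ha b hb => genK_B k hk a ha b hb) _ step1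
    have : k * (f₁ * f₂) * n * (k * (f₁ * f₂))⁻¹
        = k * (f₁ * (f₂ * n * f₂⁻¹) * f₁⁻¹) * k⁻¹ := by group
    rw [this]
    exact step0
  refine ⟨normA, normB, ?_⟩
  -- ⁅E, K⁆ = A ⊔ B
  have hsup : ⁅E, K⁆ = ⁅E₁, L₂⁆ ⊔ ⁅E₂, L₁⁆ := by
    refine le_antisymm (Subgroup.commutator_le.mpr ?_)
      (sup_le (Subgroup.commutator_mono hE₁ hL₂) (Subgroup.commutator_mono hE₂ hL₁))
    intro e he k hk
    obtain ⟨f₁, hf₁, f₂, hf₂, hfe⟩ := memEdec e he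
    subst hfe
    have key : ⁅f₁ * f₂, k⁆ = (f₁ * ⁅f₂, k⁆ * f₁⁻¹) * ⁅f₁, k⁆ := by group
    rw [key]
    have hb : ⁅f₂, k⁆ ∈ ⁅E₂, L₁⁆ := hBK ▸ Subgroup.commutator_mem_commutator hf₂ hk
    have ha : ⁅f₁, k⁆ ∈ ⁅E₁, L₂⁆ := hAK ▸ Subgroup.commutator_mem_commutator hf₁ hk
    exact mul_mem (Subgroup.mem_sup_right (normB.conj_mem _ hb f₁))
      (Subgroup.mem_sup_left ha)
  rw [hsup]
  exact Subgroup.mul_normal _ _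
end

section
/- Let G be a group, K a normal subgroup of G, and E a subgroup with G = KE and K ∩ E = 1. Suppose L₁, L₂ ≤ K with K = L₁L₂, E₁, E₂ ≤ E with E = E₁E₂, [E₁,L₁] = 1, [E₂,L₂] = 1, L₁ and L₂ abelian, E₁ and E₂ abelian, E₂ normalizes L₁, and [E₁,K] ≤ L₁. Then [E₁, [L₁,L₂]] = 1, i.e. E₁ centralizes the commutator subgroup of K. -/
open Pointwise

/-- With `G = KE`, `K ∩ E = 1`, `K = L₁L₂`, `E = E₁E₂`, `[Eᵢ,Lᵢ] = 1`,
`L₁,L₂,E₁,E₂` abelian, `E₂` normalising `L₁` and `[E₁,K] ≤ L₁`, the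
subgroup `E₁` centralises `[L₁,L₂]` (the derived subgroup of `K`). -/
theorem centralises_derived {G : Type*} [Group G]
    (K E : Subgroup G) [K.Normal]
    (hKE : (↑K * ↑E : Set G) = Set.univ) (hKEt : K ⊓ E = ⊥)
    (L₁ L₂ E₁ E₂ : Subgroup G)
    (hL₁ : L₁ ≤ K) (hL₂ : L₂ ≤ K) (hE₁ : E₁ ≤ E) (hE₂ : E₂ ≤ E)
    (hK : (↑L₁ * ↑L₂ : Set G) = (↑K : Set G))
    (hE : (↑E₁ * ↑E₂ : Set G) = (↑E : Set G))
    (h1 : ⁅E₁, L₁⁆ = ⊥) (h2 : ⁅E₂, L₂⁆ = ⊥)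
    (hL₁ab : ∀ a ∈ L₁, ∀ b ∈ L₁, a * b = b * a)
    (hL₂ab : ∀ a ∈ L₂, ∀ b ∈ L₂, a * b = b * a)
    (hE₁ab : ∀ a ∈ E₁, ∀ b ∈ E₁, a * b = b * a)
    (hE₂ab : ∀ a ∈ E₂, ∀ b ∈ E₂, a * b = b * a)
    (hnorm : ∀ e ∈ E₂, ∀ l ∈ L₁, e * l * e⁻¹ ∈ L₁)
    (hE₁K : ⁅E₁, K⁆ ≤ L₁) :
    ⁅E₁, ⁅L₁, L₂⁆⁆ = ⊥ := by
  rw [Subgroup.commutator_comm]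
  apply Subgroup.commutator_commutator_eq_bot_of_rotate
  · -- ⁅⁅L₂, E₁⁆, L₁⁆ = ⊥
    have hle : ⁅L₂, E₁⁆ ≤ L₁ := by
      rw [Subgroup.commutator_comm]
      exact le_trans (Subgroup.commutator_mono le_rfl hL₂) hE₁K
    rw [Subgroup.commutator_eq_bot_iff_le_centralizer]
    intro x hx
    rw [Subgroup.mem_centralizer_iff]
    intro y hy
    exact hL₁ab y hy x (hle hx)
  · -- ⁅⁅E₁, L₁⁆, L₂⁆ = ⊥
    rw [h1, Subgroup.commutator_bot_left]
end

section
/- Let G be a group which is the product G = T₁T₂ of two abelian subgroups T₁ and T₂. Then the commutator subgroup G' of G is abelian (Itô's theorem). -/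
open Pointwise

section ItoAux

variable {G : Type*} [Group G]

/-- Conjugating `a*b*a⁻¹*b⁻¹` by `a₁` (commuting with `a`) gives `a*c⁻¹*a⁻¹*c`
where `b⁻¹*a₁ = a₂*c`. -/
private lemma ito_key1 (a a₁ a₂ b c : G) (h : b⁻¹ * a₁ = a₂ * c)
    (c1 : a₁ * a = a * a₁) (c2 : a₂ * a = a * a₂) :
    a₁⁻¹ * (a * b * a⁻¹ * b⁻¹) * a₁ = a * c⁻¹ * a⁻¹ * c := by
  have e1 : a₁⁻¹ * a = a * a₁⁻¹ := (Commute.inv_left (c1 : Commute a₁ a) : _)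
  have e2 : a⁻¹ * a₂ = a₂ * a⁻¹ := (Commute.inv_left (Commute.symm (c2 : Commute a₂ a)) : _)
  have hinv : a₁⁻¹ * b = c⁻¹ * a₂⁻¹ := by
    have := congrArg (·⁻¹) h; simpa [mul_inv_rev] using this
  calc a₁⁻¹ * (a * b * a⁻¹ * b⁻¹) * a₁
      = (a₁⁻¹ * a) * (b * (a⁻¹ * (b⁻¹ * a₁))) := by group
    _ = (a * a₁⁻¹) * (b * (a⁻¹ * (a₂ * c))) := by rw [e1, h]
    _ = a * ((a₁⁻¹ * b) * ((a⁻¹ * a₂) * c)) := by group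
    _ = a * ((c⁻¹ * a₂⁻¹) * ((a₂ * a⁻¹) * c)) := by rw [hinv, e2]
    _ = a * c⁻¹ * a⁻¹ * c := by group

/-- Conjugating `a*b*a⁻¹*b⁻¹` by `b₁` (commuting with `b`) gives `d⁻¹*b*d*b⁻¹`
where `a⁻¹*b₁ = b₃*d`. -/
private lemma ito_key2 (a b b₁ b₃ d : G) (h : a⁻¹ * b₁ = b₃ * d)
    (c1 : b₁ * b = b * b₁) (c2 : b₃ * b = b * b₃) :
    b₁⁻¹ * (a * b * a⁻¹ * b⁻¹) * b₁ = d⁻¹ * b * d * b⁻¹ := by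
  have e1 : b⁻¹ * b₁ = b₁ * b⁻¹ := (Commute.inv_left (Commute.symm (c1 : Commute b₁ b)) : _)
  have e2 : b₃⁻¹ * b = b * b₃⁻¹ := (Commute.inv_left (c2 : Commute b₃ b) : _)
  have hinv : b₁⁻¹ * a = d⁻¹ * b₃⁻¹ := by
    have := congrArg (·⁻¹) h; simpa [mul_inv_rev] using this
  calc b₁⁻¹ * (a * b * a⁻¹ * b⁻¹) * b₁
      = (b₁⁻¹ * a) * (b * (a⁻¹ * (b⁻¹ * b₁))) := by group
    _ = (d⁻¹ * b₃⁻¹) * (b * (a⁻¹ * (b₁ * b⁻¹))) := by rw [hinv, e1]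
    _ = d⁻¹ * ((b₃⁻¹ * b) * ((a⁻¹ * b₁) * b⁻¹)) := by group
    _ = d⁻¹ * ((b * b₃⁻¹) * ((b₃ * d) * b⁻¹)) := by rw [e2, h]
    _ = d⁻¹ * b * d * b⁻¹ := by group

private lemma ito_central_left (z a b : G) (hz : ∀ g, z * g = g * z) :
    (z * a) * b * (z * a)⁻¹ * b⁻¹ = a * b * a⁻¹ * b⁻¹ := by
  have hzi : ∀ g, z⁻¹ * g = g * z⁻¹ := fun g => (Commute.inv_left (hz g : Commute z g) : _)
  calc (z * a) * b * (z * a)⁻¹ * b⁻¹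
      = z * ((a * b * a⁻¹) * z⁻¹) * b⁻¹ := by group
    _ = z * (z⁻¹ * (a * b * a⁻¹)) * b⁻¹ := by rw [← hzi]
    _ = a * b * a⁻¹ * b⁻¹ := by group

private lemma ito_central_right (z a b : G) (hz : ∀ g, z * g = g * z) :
    a * (z * b) * a⁻¹ * (z * b)⁻¹ = a * b * a⁻¹ * b⁻¹ := by
  have hzi : ∀ g, z⁻¹ * g = g * z⁻¹ := fun g => (Commute.inv_left (hz g : Commute z g) : _)
  calc a * (z * b) * a⁻¹ * (z * b)⁻¹
      = (a * z) * (b * a⁻¹ * b⁻¹ * z⁻¹) := by group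
    _ = (z * a) * (b * a⁻¹ * b⁻¹ * z⁻¹) := by rw [← hz]
    _ = z * ((a * b * a⁻¹ * b⁻¹) * z⁻¹) := by group
    _ = z * (z⁻¹ * (a * b * a⁻¹ * b⁻¹)) := by rw [← hzi]
    _ = a * b * a⁻¹ * b⁻¹ := by group

private lemma ito_key3 (a a₁ b b₁ : G) (ca : a * a₁ = a₁ * a) (cb : b * b₁ = b₁ * b) :
    (a * b) * (a₁ * b₁) * (a * b)⁻¹ * (a₁ * b₁)⁻¹ =
      (a * (b * a₁ * b⁻¹ * a₁⁻¹) * a⁻¹) * (a₁ * (a * b₁ * a⁻¹ * b₁⁻¹) * a₁⁻¹) := by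
  have e1 : a₁⁻¹ * a⁻¹ * a₁ * a = 1 := by
    rw [mul_assoc, mul_assoc, ← ca]; group
  have ecb : b₁ * b⁻¹ = b⁻¹ * b₁ :=
    (Commute.inv_right (Commute.symm (cb : Commute b b₁)) : _)
  calc (a * b) * (a₁ * b₁) * (a * b)⁻¹ * (a₁ * b₁)⁻¹
      = a * (b * (a₁ * ((b₁ * b⁻¹) * (a⁻¹ * (b₁⁻¹ * a₁⁻¹))))) := by group
    _ = a * (b * (a₁ * ((b⁻¹ * b₁) * (a⁻¹ * (b₁⁻¹ * a₁⁻¹))))) := by rw [ecb]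
    _ = (a * (b * a₁ * b⁻¹)) * (1 * (b₁ * (a⁻¹ * (b₁⁻¹ * a₁⁻¹)))) := by group
    _ = (a * (b * a₁ * b⁻¹)) * ((a₁⁻¹ * a⁻¹ * a₁ * a) * (b₁ * (a⁻¹ * (b₁⁻¹ * a₁⁻¹)))) := by
        rw [e1]
    _ = (a * (b * a₁ * b⁻¹ * a₁⁻¹) * a⁻¹) * (a₁ * (a * b₁ * a⁻¹ * b₁⁻¹) * a₁⁻¹) := by group

end ItoAux

/-- Itô's theorem: if `G = T₁T₂` is the product of two abelian subgroups,
then the derived subgroup of `G` is abelian. -/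
theorem ito_theorem {G : Type*} [Group G] (T₁ T₂ : Subgroup G)
    (hG : (↑T₁ * ↑T₂ : Set G) = Set.univ)
    (h₁ : ∀ a ∈ T₁, ∀ b ∈ T₁, a * b = b * a)
    (h₂ : ∀ a ∈ T₂, ∀ b ∈ T₂, a * b = b * a) :
    ∀ x ∈ commutator G, ∀ y ∈ commutator G, x * y = y * x := by
  -- decompositions
  have decompAB : ∀ g : G, ∃ a ∈ T₁, ∃ b ∈ T₂, g = a * b := by
    intro g
    have hg : g ∈ (↑T₁ * ↑T₂ : Set G) := by rw [hG]; trivial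
    obtain ⟨a, ha, b, hb, hab⟩ := Set.mem_mul.mp hg
    exact ⟨a, ha, b, hb, hab.symm⟩
  have decompBA : ∀ g : G, ∃ b ∈ T₂, ∃ a ∈ T₁, g = b * a := by
    intro g
    obtain ⟨a, ha, b, hb, hab⟩ := decompAB g⁻¹
    refine ⟨b⁻¹, T₂.inv_mem hb, a⁻¹, T₁.inv_mem ha, ?_⟩
    rw [← inv_inv g, hab]; group
  have central : ∀ z, z ∈ T₁ → z ∈ T₂ → ∀ g : G, z * g = g * z := by
    intro z hz1 hz2 g
    obtain ⟨a, ha, b, hb, rfl⟩ := decompAB g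
    calc z * (a * b) = (z * a) * b := by group
      _ = (a * z) * b := by rw [h₁ z hz1 a ha]
      _ = a * (z * b) := by group
      _ = a * (b * z) := by rw [h₂ z hz2 b hb]
      _ = (a * b) * z := by group
  -- the two basic conjugation steps
  have stepA : ∀ a' ∈ T₁, ∀ b' ∈ T₂, ∀ a₁ ∈ T₁, ∃ p ∈ T₂, ∃ a₂ ∈ T₁,
      (b'⁻¹ * a₁ = a₂ * p⁻¹) ∧
      a₁⁻¹ * (a' * b' * a'⁻¹ * b'⁻¹) * a₁ = a' * p * a'⁻¹ * p⁻¹ := by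
    intro a' ha' b' hb' a₁ ha₁
    obtain ⟨a₂, ha₂, c, hc, hd⟩ := decompAB (b'⁻¹ * a₁)
    refine ⟨c⁻¹, T₂.inv_mem hc, a₂, ha₂, ?_, ?_⟩
    · rw [inv_inv]; exact hd
    · rw [ito_key1 a' a₁ a₂ b' c hd (h₁ a₁ ha₁ a' ha') (h₁ a₂ ha₂ a' ha'), inv_inv]
  have stepB : ∀ a' ∈ T₁, ∀ b' ∈ T₂, ∀ b₁ ∈ T₂, ∃ q ∈ T₁, ∃ b₃ ∈ T₂,
      (a'⁻¹ * b₁ = b₃ * q⁻¹) ∧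
      b₁⁻¹ * (a' * b' * a'⁻¹ * b'⁻¹) * b₁ = q * b' * q⁻¹ * b'⁻¹ := by
    intro a' ha' b' hb' b₁ hb₁
    obtain ⟨b₃, hb₃, d, hd', hdec⟩ := decompBA (a'⁻¹ * b₁)
    refine ⟨d⁻¹, T₁.inv_mem hd', b₃, hb₃, ?_, ?_⟩
    · rw [inv_inv]; exact hdec
    · rw [ito_key2 a' b' b₁ b₃ d hdec (h₂ b₁ hb₁ b' hb') (h₂ b₃ hb₃ b' hb'), inv_inv]
  -- the set of basic commutators
  set S : Set G := {x | ∃ a ∈ T₁, ∃ b ∈ T₂, x = a * b * a⁻¹ * b⁻¹} with hS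
  have conjT₁ : ∀ x ∈ S, ∀ a₁ ∈ T₁, a₁⁻¹ * x * a₁ ∈ S := by
    rintro x ⟨a, ha, b, hb, rfl⟩ a₁ ha₁
    obtain ⟨p, hp, a₂, ha₂, _, heq⟩ := stepA a ha b hb a₁ ha₁
    exact ⟨a, ha, p, hp, heq⟩
  have conjT₂ : ∀ x ∈ S, ∀ b₁ ∈ T₂, b₁⁻¹ * x * b₁ ∈ S := by
    rintro x ⟨a, ha, b, hb, rfl⟩ b₁ hb₁
    obtain ⟨q, hq, b₃, hb₃, _, heq⟩ := stepB a ha b hb b₁ hb₁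
    exact ⟨q, hq, b, hb, heq⟩
  have conjS : ∀ x ∈ S, ∀ g : G, g⁻¹ * x * g ∈ S := by
    intro x hx g
    obtain ⟨a, ha, b, hb, rfl⟩ := decompAB g
    have h2 := conjT₂ _ (conjT₁ x hx a ha) b hb
    have hrw : b⁻¹ * (a⁻¹ * x * a) * b = (a * b)⁻¹ * x * (a * b) := by group
    rwa [hrw] at h2
  -- elements of S pairwise commute
  have comm_S : ∀ x ∈ S, ∀ y ∈ S, x * y = y * x := by
    rintro x ⟨a, ha, b, hb, rfl⟩ y ⟨a₁, ha₁, b₁, hb₁, rfl⟩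
    obtain ⟨p, hp, a₂, ha₂, hd1, s1⟩ := stepA a ha b hb a₁ ha₁
    obtain ⟨q, hq, b₃, hb₃, hd2, s2⟩ := stepB a ha p hp b₁ hb₁
    obtain ⟨r, hr, a₄, ha₄, hd3, s3⟩ := stepA q hq p hp a₁⁻¹ (T₁.inv_mem ha₁)
    obtain ⟨s, hs, b₅, hb₅, hd4, s4⟩ := stepB q hq r hr b₁⁻¹ (T₂.inv_mem hb₁)
    -- identify the central correction for r
    have h2' : a₂⁻¹ * b⁻¹ = a₄ * r⁻¹ := by
      have h1' : p⁻¹ = a₂⁻¹ * (b⁻¹ * a₁) := by rw [hd1]; group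
      calc a₂⁻¹ * b⁻¹ = (a₂⁻¹ * (b⁻¹ * a₁)) * a₁⁻¹ := by group
        _ = p⁻¹ * a₁⁻¹ := by rw [← h1']
        _ = a₄ * r⁻¹ := hd3
    have hr_inv : r⁻¹ = a₄⁻¹ * (a₂⁻¹ * b⁻¹) := by rw [h2']; group
    have humem2 : a₄⁻¹ * a₂⁻¹ ∈ T₂ := by
      have hh : a₄⁻¹ * a₂⁻¹ = r⁻¹ * b := by rw [hr_inv]; group
      rw [hh]; exact T₂.mul_mem (T₂.inv_mem hr) hb
    have humem1 : a₄⁻¹ * a₂⁻¹ ∈ T₁ := T₁.mul_mem (T₁.inv_mem ha₄) (T₁.inv_mem ha₂)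
    have hucen : ∀ g : G, (a₄⁻¹ * a₂⁻¹) * g = g * (a₄⁻¹ * a₂⁻¹) := central _ humem1 humem2
    have huicen : ∀ g : G, (a₄⁻¹ * a₂⁻¹)⁻¹ * g = g * (a₄⁻¹ * a₂⁻¹)⁻¹ :=
      fun g => (Commute.inv_left (hucen g : Commute _ g) : _)
    have hr_eq : r = (a₄⁻¹ * a₂⁻¹)⁻¹ * b := by
      have h0 : r = b * (a₄⁻¹ * a₂⁻¹)⁻¹ := by rw [← inv_inv r, hr_inv]; group
      rw [h0, ← huicen b]
    -- identify the central correction for s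
    have h2'' : b₃⁻¹ * a⁻¹ = b₅ * s⁻¹ := by
      have h1' : q⁻¹ = b₃⁻¹ * (a⁻¹ * b₁) := by rw [hd2]; group
      calc b₃⁻¹ * a⁻¹ = (b₃⁻¹ * (a⁻¹ * b₁)) * b₁⁻¹ := by group
        _ = q⁻¹ * b₁⁻¹ := by rw [← h1']
        _ = b₅ * s⁻¹ := hd4
    have hs_inv : s⁻¹ = b₅⁻¹ * (b₃⁻¹ * a⁻¹) := by rw [h2'']; group
    have hvmem1 : b₅⁻¹ * b₃⁻¹ ∈ T₁ := by
      have hh : b₅⁻¹ * b₃⁻¹ = s⁻¹ * a := by rw [hs_inv]; group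
      rw [hh]; exact T₁.mul_mem (T₁.inv_mem hs) ha
    have hvmem2 : b₅⁻¹ * b₃⁻¹ ∈ T₂ := T₂.mul_mem (T₂.inv_mem hb₅) (T₂.inv_mem hb₃)
    have hvcen : ∀ g : G, (b₅⁻¹ * b₃⁻¹) * g = g * (b₅⁻¹ * b₃⁻¹) := central _ hvmem1 hvmem2
    have hvicen : ∀ g : G, (b₅⁻¹ * b₃⁻¹)⁻¹ * g = g * (b₅⁻¹ * b₃⁻¹)⁻¹ :=
      fun g => (Commute.inv_left (hvcen g : Commute _ g) : _)
    have hs_eq : s = (b₅⁻¹ * b₃⁻¹)⁻¹ * a := by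
      have h0 : s = a * (b₅⁻¹ * b₃⁻¹)⁻¹ := by rw [← inv_inv s, hs_inv]; group
      rw [h0, ← hvicen a]
    -- the total conjugate is the original commutator
    have hfinal : s * r * s⁻¹ * r⁻¹ = a * b * a⁻¹ * b⁻¹ := by
      rw [hs_eq, hr_eq,
        ito_central_left ((b₅⁻¹ * b₃⁻¹)⁻¹) a ((a₄⁻¹ * a₂⁻¹)⁻¹ * b) hvicen,
        ito_central_right ((a₄⁻¹ * a₂⁻¹)⁻¹) a b huicen]
    have hconj : (a₁ * b₁ * a₁⁻¹ * b₁⁻¹)⁻¹ * (a * b * a⁻¹ * b⁻¹) * (a₁ * b₁ * a₁⁻¹ * b₁⁻¹)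
        = a * b * a⁻¹ * b⁻¹ := by
      have hrw : (a₁ * b₁ * a₁⁻¹ * b₁⁻¹)⁻¹ * (a * b * a⁻¹ * b⁻¹) * (a₁ * b₁ * a₁⁻¹ * b₁⁻¹)
          = (b₁⁻¹)⁻¹ * ((a₁⁻¹)⁻¹ * (b₁⁻¹ * (a₁⁻¹ * (a * b * a⁻¹ * b⁻¹) * a₁) * b₁)
              * a₁⁻¹) * b₁⁻¹ := by group
      rw [hrw, s1, s2, s3, s4, hfinal]
    calc (a * b * a⁻¹ * b⁻¹) * (a₁ * b₁ * a₁⁻¹ * b₁⁻¹)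
        = (a₁ * b₁ * a₁⁻¹ * b₁⁻¹) *
            ((a₁ * b₁ * a₁⁻¹ * b₁⁻¹)⁻¹ * (a * b * a⁻¹ * b⁻¹) * (a₁ * b₁ * a₁⁻¹ * b₁⁻¹)) := by
          group
      _ = (a₁ * b₁ * a₁⁻¹ * b₁⁻¹) * (a * b * a⁻¹ * b⁻¹) := by rw [hconj]
  -- the closure of S
  set K : Subgroup G := Subgroup.closure S with hK
  have hSK : S ⊆ ↑K := Subgroup.subset_closure
  have comm_KS : ∀ y ∈ S, ∀ x ∈ K, x * y = y * x := by
    intro y hy x hx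
    refine Subgroup.closure_induction (p := fun g _ => Commute g y)
      (fun z hz => comm_S z hz y hy) (Commute.one_left y)
      (fun z w _ _ hzc hwc => hzc.mul_left hwc)
      (fun z _ hzc => hzc.inv_left) hx
  have comm_K : ∀ x ∈ K, ∀ y ∈ K, x * y = y * x := by
    intro x hx y hy
    refine Subgroup.closure_induction (p := fun g _ => Commute x g)
      (fun z hz => (comm_KS z hz x hx : Commute x z)) (Commute.one_right x)
      (fun z w _ _ hzc hwc => hzc.mul_right hwc)
      (fun z _ hzc => hzc.inv_right) hy
  have conjK : ∀ g : G, ∀ x ∈ K, g⁻¹ * x * g ∈ K := by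
    intro g x hx
    refine Subgroup.closure_induction (p := fun z _ => g⁻¹ * z * g ∈ K)
      (fun z hz => hSK (conjS z hz g)) ?_ ?_ ?_ hx
    · simpa using K.one_mem
    · intro z w _ _ hzc hwc
      have hrw : g⁻¹ * (z * w) * g = (g⁻¹ * z * g) * (g⁻¹ * w * g) := by group
      rw [hrw]; exact K.mul_mem hzc hwc
    · intro z _ hzc
      have hrw : g⁻¹ * z⁻¹ * g = (g⁻¹ * z * g)⁻¹ := by group
      rw [hrw]; exact K.inv_mem hzc
  have hle : commutator G ≤ K := by
    rw [commutator_eq_closure]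
    refine (Subgroup.closure_le K).mpr ?_
    rintro x ⟨g, h', rfl⟩
    obtain ⟨a, ha, b, hb, rfl⟩ := decompAB g
    obtain ⟨a₁, ha₁, b₁, hb₁, rfl⟩ := decompAB h'
    rw [commutatorElement_def,
      ito_key3 a a₁ b b₁ (h₁ a ha a₁ ha₁) (h₂ b hb b₁ hb₁)]
    have m1 : b * a₁ * b⁻¹ * a₁⁻¹ ∈ K := by
      have hrw : b * a₁ * b⁻¹ * a₁⁻¹ = (a₁ * b * a₁⁻¹ * b⁻¹)⁻¹ := by group
      rw [hrw]
      exact K.inv_mem (hSK ⟨a₁, ha₁, b, hb, rfl⟩)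
    have m2 : a * b₁ * a⁻¹ * b₁⁻¹ ∈ K := hSK ⟨a, ha, b₁, hb₁, rfl⟩
    have c1 : a * (b * a₁ * b⁻¹ * a₁⁻¹) * a⁻¹ ∈ K := by
      have hrw : a * (b * a₁ * b⁻¹ * a₁⁻¹) * a⁻¹
          = (a⁻¹)⁻¹ * (b * a₁ * b⁻¹ * a₁⁻¹) * a⁻¹ := by group
      rw [hrw]; exact conjK a⁻¹ _ m1
    have c2 : a₁ * (a * b₁ * a⁻¹ * b₁⁻¹) * a₁⁻¹ ∈ K := by
      have hrw : a₁ * (a * b₁ * a⁻¹ * b₁⁻¹) * a₁⁻¹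
          = (a₁⁻¹)⁻¹ * (a * b₁ * a⁻¹ * b₁⁻¹) * a₁⁻¹ := by group
      rw [hrw]; exact conjK a₁⁻¹ _ m2
    exact K.mul_mem c1 c2
  intro x hx y hy
  exact comm_K x (hle hx) y (hle hy)
end

section
/- Let (G,K,H,E) be a trifactorised group, L₁, L₂ ≤ K with T_i = L_iH ∩ L_iE abelian subgroups of G, K = L₁L₂ and G = T₁T₂. Let X be a subgroup of G such that X = (X ∩ T₁)(X ∩ T₂). Then the centralizer of X in K factorises: C_K(X) = (C_K(X) ∩ L₁)(C_K(X) ∩ L₂). -/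
open Pointwise

/-- In a trifactorised group with `K = L₁L₂`, `G = T₁T₂` for the abelian
subgroups `Tᵢ = LᵢH ∩ LᵢE`, and a factorised subgroup `X`, the centraliser
`C_K(X)` factorises as `(C_K(X) ∩ L₁)(C_K(X) ∩ L₂)`. -/
theorem centraliser_factorised {G : Type*} [Group G]
    (K H E : Subgroup G) [K.Normal]
    (hKE : (K : Set G) * (E : Set G) = Set.univ)
    (hKH : (K : Set G) * (H : Set G) = Set.univ)
    (hHE : (H : Set G) * (E : Set G) = Set.univ)
    (hKEt : K ⊓ E = ⊥) (hHEt : H ⊓ E = ⊥)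
    (L₁ L₂ : Subgroup G) (hL₁ : L₁ ≤ K) (hL₂ : L₂ ≤ K)
    (T₁ T₂ : Subgroup G)
    (hT₁ : (T₁ : Set G) = ((L₁ : Set G) * (H : Set G)) ∩ ((L₁ : Set G) * (E : Set G)))
    (hT₂ : (T₂ : Set G) = ((L₂ : Set G) * (H : Set G)) ∩ ((L₂ : Set G) * (E : Set G)))
    (hT₁ab : ∀ a ∈ T₁, ∀ b ∈ T₁, a * b = b * a)
    (hT₂ab : ∀ a ∈ T₂, ∀ b ∈ T₂, a * b = b * a)
    (hK : (L₁ : Set G) * (L₂ : Set G) = (K : Set G))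
    (hG : (T₁ : Set G) * (T₂ : Set G) = Set.univ)
    (X : Subgroup G)
    (hX : (X : Set G) = ((X : Set G) ∩ (T₁ : Set G)) * ((X : Set G) ∩ (T₂ : Set G))) :
    {k : G | k ∈ K ∧ ∀ x ∈ X, k * x = x * k} =
      ({k : G | k ∈ K ∧ ∀ x ∈ X, k * x = x * k} ∩ (L₁ : Set G)) *
        ({k : G | k ∈ K ∧ ∀ x ∈ X, k * x = x * k} ∩ (L₂ : Set G)) := by
  have hL₁T : ∀ l ∈ L₁, l ∈ T₁ := by
    intro l hl
    have : l ∈ (T₁ : Set G) := by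
      rw [hT₁]
      exact ⟨⟨l, hl, 1, H.one_mem, mul_one l⟩, ⟨l, hl, 1, E.one_mem, mul_one l⟩⟩
    exact this
  have hL₂T : ∀ l ∈ L₂, l ∈ T₂ := by
    intro l hl
    have : l ∈ (T₂ : Set G) := by
      rw [hT₂]
      exact ⟨⟨l, hl, 1, H.one_mem, mul_one l⟩, ⟨l, hl, 1, E.one_mem, mul_one l⟩⟩
    exact this
  ext k
  constructor
  · rintro ⟨hk, hcomm⟩
    have hkmem : k ∈ (L₁ : Set G) * (L₂ : Set G) := by rw [hK]; exact hk
    obtain ⟨l₁, hl₁, l₂, hl₂, rfl⟩ := hkmem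
    have hl₁T := hL₁T l₁ hl₁
    have hl₂T := hL₂T l₂ hl₂
    -- l₂ centralizes X
    have h2 : ∀ x ∈ X, l₂ * x = x * l₂ := by
      intro x hx
      have hx' : x ∈ ((X : Set G) ∩ (T₁ : Set G)) * ((X : Set G) ∩ (T₂ : Set G)) := by
        rw [← hX]; exact hx
      obtain ⟨a, ⟨haX, haT⟩, b, ⟨hbX, hbT⟩, rfl⟩ := hx'
      have hb : l₂ * b = b * l₂ := hT₂ab _ hl₂T _ hbT
      have h1a : l₁ * a = a * l₁ := hT₁ab _ hl₁T _ haT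
      have hka : l₁ * l₂ * a = a * (l₁ * l₂) := hcomm a haX
      have ha : l₂ * a = a * l₂ := by
        have e1 : l₂ * a = l₁⁻¹ * (l₁ * l₂ * a) := by group
        rw [hka] at e1
        have e2 : a * l₁⁻¹ = l₁⁻¹ * a := by
          have := congrArg (fun t => l₁⁻¹ * t * l₁⁻¹) h1a
          simpa [mul_assoc] using this
        calc l₂ * a = l₁⁻¹ * (a * (l₁ * l₂)) := e1
          _ = (l₁⁻¹ * a) * l₁ * l₂ := by simp [mul_assoc]
          _ = (a * l₁⁻¹) * l₁ * l₂ := by rw [← e2]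
          _ = a * l₂ := by simp [mul_assoc]
      calc l₂ * (a * b) = (l₂ * a) * b := by rw [mul_assoc]
        _ = a * (l₂ * b) := by rw [ha, mul_assoc]
        _ = a * b * l₂ := by rw [hb, mul_assoc]
    -- l₁ centralizes X
    have h1 : ∀ x ∈ X, l₁ * x = x * l₁ := by
      intro x hx
      have h2' : l₂⁻¹ * x = x * l₂⁻¹ := by
        have := congrArg (fun t => l₂⁻¹ * t * l₂⁻¹) (h2 x hx)
        simpa [mul_assoc] using this.symm
      have hkx := hcomm x hx
      calc l₁ * x = l₁ * l₂ * (l₂⁻¹ * x) := by group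
        _ = l₁ * l₂ * (x * l₂⁻¹) := by rw [h2']
        _ = (l₁ * l₂ * x) * l₂⁻¹ := by simp [mul_assoc]
        _ = (x * (l₁ * l₂)) * l₂⁻¹ := by rw [hkx]
        _ = x * l₁ := by group
    exact ⟨l₁, ⟨⟨hL₁ hl₁, h1⟩, hl₁⟩, l₂, ⟨⟨hL₂ hl₂, h2⟩, hl₂⟩, rfl⟩
  · rintro ⟨a, ⟨⟨haK, haC⟩, _⟩, b, ⟨⟨hbK, hbC⟩, _⟩, rfl⟩
    refine ⟨K.mul_mem haK hbK, fun x hx => ?_⟩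
    rw [mul_assoc, hbC x hx, ← mul_assoc, haC x hx, mul_assoc]
end

section
/- Let G be a finite group with abelian derived subgroup G', and suppose G = T₁T₂ with T₁, T₂ abelian subgroups. Then the subgroup X = G'T₁ ∩ G'T₂ is nilpotent. -/
open Pointwise

section Aux

variable {H : Type*} [Group H]

private lemma card_mul_card_of_decomp [Finite H] (U V : Subgroup H)
    (hcov : ∀ x : H, ∃ u ∈ U, ∃ v ∈ V, x = u * v)
    (htriv : ∀ x : H, x ∈ U → x ∈ V → x = 1) :
    Nat.card U * Nat.card V = Nat.card H := by
  rw [← Nat.card_prod]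
  apply Nat.card_congr
  refine Equiv.ofBijective (fun p : U × V => (p.1 : H) * (p.2 : H)) ⟨?_, ?_⟩
  · rintro ⟨⟨u, hu⟩, ⟨v, hv⟩⟩ ⟨⟨u', hu'⟩, ⟨v', hv'⟩⟩ h
    simp only at h
    have h2 : u'⁻¹ * u = v' * v⁻¹ := by
      rw [inv_mul_eq_iff_eq_mul, ← mul_assoc, ← h, mul_assoc]
      simp
    have h3 : u'⁻¹ * u = 1 :=
      htriv _ (mul_mem (inv_mem hu') hu) (h2 ▸ mul_mem hv' (inv_mem hv))
    have hu0 : u = u' := by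
      rw [inv_mul_eq_one] at h3; exact h3.symm
    subst hu0
    have hv0 : v = v' := by
      have := mul_left_cancel h
      exact this
    subst hv0
    rfl
  · intro x
    obtain ⟨u, hu, v, hv, rfl⟩ := hcov x
    exact ⟨(⟨u, hu⟩, ⟨v, hv⟩), rfl⟩

private lemma map_comm {K' : Type*} [Group K'] (f : H →* K') (U : Subgroup H)
    (hU : ∀ a ∈ U, ∀ b ∈ U, a * b = b * a) :
    ∀ a ∈ U.map f, ∀ b ∈ U.map f, a * b = b * a := by
  intro a' ha' b' hb'
  obtain ⟨a, ha, rfl⟩ := Subgroup.mem_map.mp ha'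
  obtain ⟨b, hb, rfl⟩ := Subgroup.mem_map.mp hb'
  rw [← map_mul, ← map_mul, hU a ha b hb]

private lemma map_cover {K' : Type*} [Group K'] (f : H →* K') (hf : Function.Surjective f)
    (U V : Subgroup H) (hUV : ∀ x : H, ∃ u ∈ U, ∃ v ∈ V, x = u * v) :
    ∀ y : K', ∃ u ∈ U.map f, ∃ v ∈ V.map f, y = u * v := by
  intro y
  obtain ⟨x, rfl⟩ := hf y
  obtain ⟨u, hu, v, hv, rfl⟩ := hUV x
  exact ⟨f u, Subgroup.mem_map_of_mem f hu, f v, Subgroup.mem_map_of_mem f hv, map_mul f u v⟩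

end Aux

/-- Key lemma: a finite group `H = AB = NA = NB` with `A`, `B`, `N` abelian subgroups
and `N` normal is nilpotent. -/
private lemma nilpotent_of_factorization (n : ℕ) :
    ∀ (H : Type u) [Group H] [Finite H] (A B N : Subgroup H), N.Normal →
    (∀ a ∈ A, ∀ b ∈ A, a * b = b * a) →
    (∀ a ∈ B, ∀ b ∈ B, a * b = b * a) →
    (∀ a ∈ N, ∀ b ∈ N, a * b = b * a) →
    (∀ x : H, ∃ u ∈ A, ∃ v ∈ B, x = u * v) →
    (∀ x : H, ∃ u ∈ N, ∃ v ∈ A, x = u * v) →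
    (∀ x : H, ∃ u ∈ N, ∃ v ∈ B, x = u * v) →
    Nat.card H ≤ n → Group.IsNilpotent H := by
  induction n with
  | zero =>
    intro H _ _ A B N _ _ _ _ _ _ _ hn
    have : Nonempty H := ⟨1⟩
    have := Nat.card_pos (α := H)
    omega
  | succ n ih =>
    intro H _ _ A B N hNnorm hA hB hN hAB hNA hNB hn
    -- every proper quotient is nilpotent
    have hquot : ∀ (K : Subgroup H) [K.Normal], K ≠ ⊥ → Group.IsNilpotent (H ⧸ K) := by
      intro K hK hKbot
      have hsurj := QuotientGroup.mk'_surjective K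
      refine ih (H ⧸ K) (A.map (QuotientGroup.mk' K)) (B.map (QuotientGroup.mk' K))
        (N.map (QuotientGroup.mk' K)) (hNnorm.map _ hsurj)
        (map_comm _ A hA) (map_comm _ B hB) (map_comm _ N hN)
        (map_cover _ hsurj A B hAB) (map_cover _ hsurj N A hNA) (map_cover _ hsurj N B hNB) ?_
      have h1 : Nat.card H = Nat.card (H ⧸ K) * Nat.card K :=
        Subgroup.card_eq_card_quotient_mul_card_subgroup K
      have h2 : 1 < Nat.card K := (Subgroup.one_lt_card_iff_ne_bot (H := K)).mpr hKbot
      have : Nonempty (H ⧸ K) := ⟨1⟩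
      have h3 : 0 < Nat.card (H ⧸ K) := Nat.card_pos
      have h4 : Nat.card (H ⧸ K) * 2 ≤ Nat.card (H ⧸ K) * Nat.card K :=
        Nat.mul_le_mul_left _ h2
      omega
    -- the center must be trivial
    by_cases hZ : Subgroup.center H = ⊥
    swap
    · exact of_quotient_center_nilpotent (hquot _ hZ)
    -- if N is trivial, H is abelian hence trivial hence nilpotent
    by_cases hNbot : N = ⊥
    · have hcenter : ∀ x : H, x ∈ Subgroup.center H := by
        intro x
        rw [Subgroup.mem_center_iff]
        intro g
        obtain ⟨u, hu, v, hv, rfl⟩ := hNA g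
        obtain ⟨u', hu', v', hv', rfl⟩ := hNA x
        rw [hNbot, Subgroup.mem_bot] at hu hu'
        subst hu; subst hu'
        simp only [one_mul]
        exact (hA v hv v' hv')
      haveI : Subsingleton H := ⟨fun x y => by
        have hx := hcenter x
        have hy := hcenter y
        rw [hZ, Subgroup.mem_bot] at hx hy
        rw [hx, hy]⟩
      infer_instance
    -- intersections are central, hence trivial
    have htrivNA : ∀ x : H, x ∈ N → x ∈ A → x = 1 := by
      intro x hxN hxA
      have hc : x ∈ Subgroup.center H := by
        rw [Subgroup.mem_center_iff]
        intro g
        obtain ⟨u, hu, v, hv, rfl⟩ := hNA g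
        rw [mul_assoc, hA v hv x hxA, ← mul_assoc, hN u hu x hxN, mul_assoc]
      rw [hZ, Subgroup.mem_bot] at hc
      exact hc
    have htrivNB : ∀ x : H, x ∈ N → x ∈ B → x = 1 := by
      intro x hxN hxB
      have hc : x ∈ Subgroup.center H := by
        rw [Subgroup.mem_center_iff]
        intro g
        obtain ⟨u, hu, v, hv, rfl⟩ := hNB g
        rw [mul_assoc, hB v hv x hxB, ← mul_assoc, hN u hu x hxN, mul_assoc]
      rw [hZ, Subgroup.mem_bot] at hc
      exact hc
    have htrivAB : ∀ x : H, x ∈ A → x ∈ B → x = 1 := by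
      intro x hxA hxB
      have hc : x ∈ Subgroup.center H := by
        rw [Subgroup.mem_center_iff]
        intro g
        obtain ⟨u, hu, v, hv, rfl⟩ := hAB g
        rw [mul_assoc, hB v hv x hxB, ← mul_assoc, hA u hu x hxA, mul_assoc]
      rw [hZ, Subgroup.mem_bot] at hc
      exact hc
    -- counting: |A| = |B| = |N|
    have cNA := card_mul_card_of_decomp N A hNA htrivNA
    have cNB := card_mul_card_of_decomp N B hNB htrivNB
    have cAB := card_mul_card_of_decomp A B hAB htrivAB
    have hApos : 0 < Nat.card A := Nat.card_pos
    have hNpos : 0 < Nat.card N := Nat.card_pos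
    have hABeq : Nat.card A = Nat.card B :=
      Nat.eq_of_mul_eq_mul_left hNpos (by rw [cNA, cNB])
    have hNAeq : Nat.card N = Nat.card A :=
      Nat.eq_of_mul_eq_mul_right hApos (by rw [cNA, ← cAB, ← hABeq])
    -- pick a prime dividing |N|
    have hNone : 1 < Nat.card N := (Subgroup.one_lt_card_iff_ne_bot (H := N)).mpr hNbot
    obtain ⟨p, hp, hpd⟩ := Nat.exists_prime_and_dvd (show Nat.card N ≠ 1 by omega)
    haveI : Fact p.Prime := ⟨hp⟩
    have hHpos : 0 < Nat.card H := Nat.card_pos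
    obtain ⟨e, he⟩ : ∃ e, e = Nat.card H := ⟨_, rfl⟩
    obtain ⟨m, hm⟩ : ∃ m, m = Nat.card H / p ^ (Nat.card H).factorization p := ⟨_, rfl⟩
    have hpm : ¬ p ∣ m := by rw [hm]; exact Nat.not_dvd_ordCompl hp (by omega)
    -- p-part and p'-part of N, as subgroups of H
    let P : Subgroup H :=
      { carrier := {x | x ∈ N ∧ x ^ p ^ e = 1}
        one_mem' := ⟨N.one_mem, one_pow _⟩
        mul_mem' := by
          rintro x y ⟨hxN, hx⟩ ⟨hyN, hy⟩
          refine ⟨N.mul_mem hxN hyN, ?_⟩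
          rw [(show Commute x y from hN x hxN y hyN).mul_pow, hx, hy, one_mul]
        inv_mem' := by
          rintro x ⟨hxN, hx⟩
          exact ⟨N.inv_mem hxN, by rw [inv_pow, hx, inv_one]⟩ }
    let Q : Subgroup H :=
      { carrier := {x | x ∈ N ∧ x ^ m = 1}
        one_mem' := ⟨N.one_mem, one_pow _⟩
        mul_mem' := by
          rintro x y ⟨hxN, hx⟩ ⟨hyN, hy⟩
          refine ⟨N.mul_mem hxN hyN, ?_⟩
          rw [(show Commute x y from hN x hxN y hyN).mul_pow, hx, hy, one_mul]
        inv_mem' := by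
          rintro x ⟨hxN, hx⟩
          exact ⟨N.inv_mem hxN, by rw [inv_pow, hx, inv_one]⟩ }
    have hPmem : ∀ x : H, x ∈ P ↔ x ∈ N ∧ x ^ p ^ e = 1 := fun x => Iff.rfl
    have hQmem : ∀ x : H, x ∈ Q ↔ x ∈ N ∧ x ^ m = 1 := fun x => Iff.rfl
    have hPnorm : P.Normal := by
      constructor
      intro x hx g
      obtain ⟨hxN, hxe⟩ := (hPmem x).mp hx
      exact (hPmem _).mpr ⟨hNnorm.conj_mem x hxN g, by rw [conj_pow, hxe]; simp⟩
    have hQnorm : Q.Normal := by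
      constructor
      intro x hx g
      obtain ⟨hxN, hxe⟩ := (hQmem x).mp hx
      exact (hQmem _).mpr ⟨hNnorm.conj_mem x hxN g, by rw [conj_pow, hxe]; simp⟩
    -- coprimality facts
    have hcop : Nat.Coprime (p ^ e) m :=
      Nat.Coprime.pow_left e ((Nat.Prime.coprime_iff_not_dvd hp).mpr hpm)
    have hPQ : P ⊓ Q = ⊥ := by
      rw [Subgroup.eq_bot_iff_forall]
      intro x hx
      obtain ⟨⟨hxN, hx1⟩, ⟨_, hx2⟩⟩ := Subgroup.mem_inf.mp hx
      have d1 : orderOf x ∣ p ^ e := orderOf_dvd_of_pow_eq_one hx1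
      have d2 : orderOf x ∣ m := orderOf_dvd_of_pow_eq_one hx2
      have h3 := Nat.dvd_gcd d1 d2
      rw [Nat.Coprime] at hcop
      rw [hcop, Nat.dvd_one, orderOf_eq_one_iff] at h3
      exact h3
    have hPbot : P ≠ ⊥ := by
      obtain ⟨g, hg⟩ := exists_prime_orderOf_dvd_card' (G := N) p hpd
      have hgH : orderOf (g : H) = p :=
        (orderOf_injective N.subtype N.subtype_injective g).trans hg
      have hx : (g : H) ∈ P := by
        refine (hPmem _).mpr ⟨g.2, ?_⟩
        have hdv : orderOf (g : H) ∣ p ^ e := hgH ▸ dvd_pow_self p (show e ≠ 0 by omega)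
        exact orderOf_dvd_iff_pow_eq_one.mp hdv
      intro hb
      rw [hb, Subgroup.mem_bot] at hx
      rw [hx, orderOf_one] at hgH
      exact hp.ne_one hgH.symm
    by_cases hQbot : Q = ⊥
    · -- N is a p-group, so |H| = |N|² is a power of p
      have hNp : ∀ y : H, y ∈ N → y ^ p ^ e = 1 := by
        intro y hyN
        have hdvd : Nat.card H ∣ p ^ e * m := by
          have hk1 : p ^ (Nat.card H).factorization p ∣ Nat.card H := Nat.ordProj_dvd _ _
          have hk2 : (Nat.card H).factorization p ≤ e := by
            have h7 := Nat.lt_pow_self (n := (Nat.card H).factorization p) hp.one_lt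
            have h8 := Nat.le_of_dvd hHpos hk1
            omega
          have h5 : p ^ (Nat.card H).factorization p * m = Nat.card H := by
            rw [hm]; exact Nat.ordProj_mul_ordCompl_eq_self _ _
          calc Nat.card H = p ^ (Nat.card H).factorization p * m := h5.symm
            _ ∣ p ^ e * m := mul_dvd_mul_right (pow_dvd_pow p hk2) m
        have hz : y ^ p ^ e ∈ Q := by
          refine (hQmem _).mpr ⟨N.pow_mem hyN _, ?_⟩
          rw [← pow_mul]
          obtain ⟨c, hc⟩ := hdvd
          rw [hc, pow_mul, pow_card_eq_one', one_pow]
        rwa [hQbot, Subgroup.mem_bot] at hz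
      have hNpgroup : IsPGroup p N := by
        intro g
        refine ⟨e, ?_⟩
        have h6 := hNp (g : H) g.2
        apply Subtype.ext
        push_cast
        exact h6
      obtain ⟨t, ht⟩ := (IsPGroup.iff_card (p := p) (G := N)).mp hNpgroup
      have hcardH : Nat.card H = p ^ (t + t) := by
        rw [← cNA, ← hNAeq, ht, ← pow_add]
      exact ((IsPGroup.iff_card (p := p) (G := H)).mpr ⟨t + t, hcardH⟩).isNilpotent
    · -- both P and Q are nontrivial: embed H into (H ⧸ P) × (H ⧸ Q)
      haveI := hPnorm
      haveI := hQnorm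
      haveI := hquot P hPbot
      haveI := hquot Q hQbot
      refine isNilpotent_of_ker_le_center
        ((QuotientGroup.mk' P).prod (QuotientGroup.mk' Q)) ?_
      rw [MonoidHom.ker_prod, QuotientGroup.ker_mk', QuotientGroup.ker_mk', hPQ]
      exact bot_le

open Pointwise in
/-- If a finite group `G` with abelian derived subgroup is the product of two
abelian subgroups `T₁` and `T₂`, then `X = G'T₁ ∩ G'T₂` is nilpotent. -/
theorem intersection_nilpotent {G : Type*} [Group G] [Finite G]
    (hG' : ∀ a ∈ commutator G, ∀ b ∈ commutator G, a * b = b * a)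
    (T₁ T₂ : Subgroup G)
    (hG : (T₁ : Set G) * (T₂ : Set G) = Set.univ)
    (h₁ : ∀ a ∈ T₁, ∀ b ∈ T₁, a * b = b * a)
    (h₂ : ∀ a ∈ T₂, ∀ b ∈ T₂, a * b = b * a)
    (X : Subgroup G)
    (hX : (X : Set G) = ((commutator G : Set G) * (T₁ : Set G)) ∩
      ((commutator G : Set G) * (T₂ : Set G))) :
    Group.IsNilpotent X := by
  have hmem : ∀ g : G, g ∈ X ↔
      (∃ c ∈ commutator G, ∃ t ∈ T₁, c * t = g) ∧
      (∃ c ∈ commutator G, ∃ t ∈ T₂, c * t = g) := by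
    intro g
    constructor
    · intro hg
      have hg' : g ∈ (X : Set G) := hg
      rw [hX] at hg'
      exact ⟨Set.mem_mul.mp hg'.1, Set.mem_mul.mp hg'.2⟩
    · intro ⟨hg1, hg2⟩
      have : g ∈ (X : Set G) := by
        rw [hX]
        exact ⟨Set.mem_mul.mpr hg1, Set.mem_mul.mpr hg2⟩
      exact this
  have hNX : ∀ c : G, c ∈ commutator G → c ∈ X := by
    intro c hc
    rw [hmem]
    exact ⟨⟨c, hc, 1, T₁.one_mem, mul_one c⟩, ⟨c, hc, 1, T₂.one_mem, mul_one c⟩⟩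
  refine nilpotent_of_factorization (Nat.card X) X
    (T₁.subgroupOf X) (T₂.subgroupOf X) ((commutator G).subgroupOf X)
    inferInstance ?_ ?_ ?_ ?_ ?_ ?_ le_rfl
  · intro a ha b hb
    exact Subtype.ext (h₁ a (Subgroup.mem_subgroupOf.mp ha) b (Subgroup.mem_subgroupOf.mp hb))
  · intro a ha b hb
    exact Subtype.ext (h₂ a (Subgroup.mem_subgroupOf.mp ha) b (Subgroup.mem_subgroupOf.mp hb))
  · intro a ha b hb
    exact Subtype.ext (hG' a (Subgroup.mem_subgroupOf.mp ha) b (Subgroup.mem_subgroupOf.mp hb))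
  · -- X = (T₁ ∩ X)(T₂ ∩ X)
    intro x
    obtain ⟨_, ⟨c, hc, u, hu, hcu⟩⟩ := (hmem (x : G)).mp x.2
    have hx1 : (x : G) ∈ (T₁ : Set G) * (T₂ : Set G) := by rw [hG]; trivial
    obtain ⟨t₁, ht₁, t₂, ht₂, h12⟩ := Set.mem_mul.mp hx1
    have ht₁X : t₁ ∈ X := by
      rw [hmem]
      refine ⟨⟨1, (commutator G).one_mem, t₁, ht₁, one_mul t₁⟩,
        ⟨c, hc, u * t₂⁻¹, mul_mem hu (inv_mem ht₂), ?_⟩⟩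
      rw [← mul_assoc, hcu, ← h12, mul_inv_cancel_right]
    have ht₂X : t₂ ∈ X := by
      have h9 : t₁⁻¹ * (x : G) ∈ X := mul_mem (inv_mem ht₁X) x.2
      rwa [show t₂ = t₁⁻¹ * (x : G) by rw [← h12, inv_mul_cancel_left]]
    exact ⟨⟨t₁, ht₁X⟩, Subgroup.mem_subgroupOf.mpr ht₁,
      ⟨t₂, ht₂X⟩, Subgroup.mem_subgroupOf.mpr ht₂, Subtype.ext h12.symm⟩
  · -- X = G'(T₁ ∩ X)
    intro x
    obtain ⟨⟨c, hc, t, ht, hct⟩, _⟩ := (hmem (x : G)).mp x.2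
    have hcX : c ∈ X := hNX c hc
    have htX : t ∈ X := by
      have h9 : c⁻¹ * (x : G) ∈ X := mul_mem (inv_mem hcX) x.2
      rwa [show t = c⁻¹ * (x : G) by rw [← hct, inv_mul_cancel_left]]
    exact ⟨⟨c, hcX⟩, Subgroup.mem_subgroupOf.mpr hc,
      ⟨t, htX⟩, Subgroup.mem_subgroupOf.mpr ht, Subtype.ext hct.symm⟩
  · -- X = G'(T₂ ∩ X)
    intro x
    obtain ⟨_, ⟨c, hc, t, ht, hct⟩⟩ := (hmem (x : G)).mp x.2
    have hcX : c ∈ X := hNX c hc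
    have htX : t ∈ X := by
      have h9 : c⁻¹ * (x : G) ∈ X := mul_mem (inv_mem hcX) x.2
      rwa [show t = c⁻¹ * (x : G) by rw [← hct, inv_mul_cancel_left]]
    exact ⟨⟨c, hcX⟩, Subgroup.mem_subgroupOf.mpr hc,
      ⟨t, htX⟩, Subgroup.mem_subgroupOf.mpr ht, Subtype.ext hct.symm⟩
end

section
/- Let B = A₁ + A₂ = A₁A₂ be a skew left brace which is both the sum and product of two trivial subbraces A₁ and A₂. Then Fix(B) = (Fix(B) ∩ A₁) + (Fix(B) ∩ A₂) and A₁ ∩ A₂ ⊆ Fix(B), i.e. Fix(B) is a factorised subbrace. -/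
namespace SkewBrace

variable {B : Type*} [SkewBrace B]

lemma mul_zero'' (b : B) : b * (0 : B) = b := by
  have h := mul_add_dist b 0 0
  rw [add_zero, add_assoc] at h
  nth_rewrite 1 [← add_zero (b * 0)] at h
  have h0 := add_left_cancel h
  have h1 : b * 0 = b + (-b + b * 0) := by
    rw [← add_assoc, add_neg_cancel, zero_add]
  rw [← h0, add_zero] at h1
  exact h1

lemma lam_add (b x y : B) : lam b (x + y) = lam b x + lam b y := by
  unfold lam
  rw [mul_add_dist]
  simp [add_assoc]

lemma lam_zero (b : B) : lam b (0 : B) = 0 := by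
  unfold lam
  rw [mul_zero'', neg_add_cancel]

lemma lam_neg (b x : B) : lam b (-x) = -(lam b x) := by
  have h : lam b x + lam b (-x) = 0 := by
    rw [← lam_add, add_neg_cancel, lam_zero]
  exact (neg_eq_of_add_eq_zero_right h).symm

lemma mul_neg' (b c : B) : b * (-c) = b + -(b * c) + b := by
  have h := mul_add_dist b c (-c)
  rw [add_neg_cancel, mul_zero''] at h
  have h2 : b * (-c) = -(b * c + -b) + ((b * c + -b) + b * (-c)) := by
    rw [← add_assoc, neg_add_cancel, zero_add]
  rw [← h] at h2
  rw [h2, neg_add_rev, neg_neg]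

lemma lam_mul (b c x : B) : lam (b * c) x = lam b (lam c x) := by
  unfold lam
  rw [mul_add_dist, mul_neg', mul_assoc]
  simp [add_assoc]

end SkewBrace

open SkewBrace in
/-- If `B = A₁ + A₂ = A₁A₂` with `A₁`, `A₂` trivial subbraces, then `Fix(B)`
is a factorised subbrace. -/
theorem fix_factorised {B : Type*} [SkewBrace B] (A₁ A₂ : Set B)
    (h₁ : IsTrivialSubbrace A₁) (h₂ : IsTrivialSubbrace A₂)
    (hsum : ∀ x : B, ∃ a ∈ A₁, ∃ b ∈ A₂, x = a + b)
    (hprod : ∀ x : B, ∃ a ∈ A₁, ∃ b ∈ A₂, x = a * b) :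
    {a : B | ∀ b : B, lam b a = a} =
      {x : B | ∃ a ∈ {a : B | ∀ b : B, lam b a = a} ∩ A₁,
        ∃ c ∈ {a : B | ∀ b : B, lam b a = a} ∩ A₂, x = a + c} ∧
    A₁ ∩ A₂ ⊆ {a : B | ∀ b : B, lam b a = a} := by
  -- elements of A₂ are fixed by λ_b for b ∈ A₂, similarly for A₁
  have fix₁ : ∀ b ∈ A₁, ∀ a ∈ A₁, lam b a = a := by
    intro b hb a ha
    unfold lam
    rw [h₁.2 b hb a ha, ← add_assoc, neg_add_cancel, zero_add]
  have fix₂ : ∀ b ∈ A₂, ∀ a ∈ A₂, lam b a = a := by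
    intro b hb a ha
    unfold lam
    rw [h₂.2 b hb a ha, ← add_assoc, neg_add_cancel, zero_add]
  -- if an element is fixed by all of A₁ and all of A₂, it is in Fix(B)
  have key : ∀ x : B, (∀ b ∈ A₁, lam b x = x) → (∀ b ∈ A₂, lam b x = x) →
      ∀ b : B, lam b x = x := by
    intro x k₁ k₂ b
    obtain ⟨b₁, hb₁, b₂, hb₂, rfl⟩ := hprod b
    rw [lam_mul, k₂ b₂ hb₂, k₁ b₁ hb₁]
  constructor
  · ext f
    constructor
    · intro hf
      obtain ⟨a₁, ha₁, a₂, ha₂, hfe⟩ := hsum f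
      -- a₂ is fixed by every b ∈ A₁
      have k₂ : ∀ b ∈ A₁, lam b a₂ = a₂ := by
        intro b hb
        have h := hf b
        rw [hfe] at h
        unfold lam at h
        rw [mul_add_dist, h₁.2 b hb a₁ ha₁] at h
        -- h : -b + (b + a₁ + -b + b * a₂) = a₁ + a₂
        have h' : a₁ + (-b + b * a₂) = a₁ + a₂ := by
          calc a₁ + (-b + b * a₂)
              = -b + (b + a₁ + -b + b * a₂) := by
                simp [add_assoc]
            _ = a₁ + a₂ := h
        exact add_left_cancel h'
      have ha₂fix : ∀ b : B, lam b a₂ = a₂ := key a₂ k₂ (fun b hb => fix₂ b hb a₂ ha₂)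
      have ha₁fix : ∀ b : B, lam b a₁ = a₁ := by
        intro b
        have : a₁ = f + -a₂ := by rw [hfe, add_assoc, add_neg_cancel, add_zero]
        rw [this, lam_add, lam_neg, hf b, ha₂fix b]
      exact ⟨a₁, ⟨ha₁fix, ha₁⟩, a₂, ⟨ha₂fix, ha₂⟩, hfe⟩
    · rintro ⟨a, ⟨hafix, -⟩, c, ⟨hcfix, -⟩, rfl⟩
      intro b
      rw [lam_add, hafix b, hcfix b]
  · rintro a ⟨ha₁, ha₂⟩
    exact key a (fun b hb => fix₁ b hb a ha₁) (fun b hb => fix₂ b hb a ha₂)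
end

section
/- Let B = A₁ + A₂ = A₁A₂ be a skew left brace which is both the sum and product of two trivial subbraces A₁ and A₂. Then Ker λ = (Ker λ ∩ A₁) + (Ker λ ∩ A₂) and A₁ ∩ A₂ ⊆ Ker λ, i.e. Ker λ is a factorised subbrace of B. -/
section Aux
open SkewBrace
variable {B : Type*} [SkewBrace B]

lemma sb_mul_zero (a : B) : a * (0 : B) = a := by
  have h := SkewBrace.mul_add_dist a 0 0
  rw [add_zero] at h
  have h0 : (0 : B) = -a + a * 0 := by
    nth_rewrite 1 [← add_zero (a * 0)] at h
    rw [add_assoc] at h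
    exact add_left_cancel h
  have := congrArg (a + ·) h0
  simpa [← add_assoc] using this.symm

lemma sb_mul_neg (a c : B) : a * (-c) = a + -(a * c) + a := by
  have h := SkewBrace.mul_add_dist a (-c) c
  rw [neg_add_cancel, sb_mul_zero] at h
  have h2 : a + -(a * c) = a * (-c) + -a := by
    have h3 : a + -(a * c) = (a * (-c) + -a + a * c) + -(a * c) := by rw [← h]
    rw [h3]; simp [add_assoc]
  have := congrArg (· + a) h2
  simpa [add_assoc] using this.symm

lemma sb_lam_add (a b c : B) : lam a (b + c) = lam a b + lam a c := by
  unfold lam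
  rw [SkewBrace.mul_add_dist]
  simp [add_assoc]

lemma sb_lam_mul (a c b : B) : lam (a * c) b = lam a (lam c b) := by
  unfold lam
  rw [SkewBrace.mul_add_dist a (-c) (c * b), sb_mul_neg, ← mul_assoc]
  simp [add_assoc]

end Aux

open SkewBrace in
/-- If `B = A₁ + A₂ = A₁A₂` with `A₁`, `A₂` trivial subbraces, then `Ker λ`
is a factorised subbrace. -/
theorem kerLambda_factorised {B : Type*} [SkewBrace B] (A₁ A₂ : Set B)
    (h₁ : IsTrivialSubbrace A₁) (h₂ : IsTrivialSubbrace A₂)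
    (hsum : ∀ x : B, ∃ a ∈ A₁, ∃ b ∈ A₂, x = a + b)
    (hprod : ∀ x : B, ∃ a ∈ A₁, ∃ b ∈ A₂, x = a * b) :
    {a : B | ∀ b : B, lam a b = b} =
      {x : B | ∃ a ∈ {a : B | ∀ b : B, lam a b = b} ∩ A₁,
        ∃ c ∈ {a : B | ∀ b : B, lam a b = b} ∩ A₂, x = a + c} ∧
    A₁ ∩ A₂ ⊆ {a : B | ∀ b : B, lam a b = b} := by
  have triv : ∀ (S : Set B), IsTrivialSubbrace S → ∀ a ∈ S, ∀ b ∈ S, lam a b = b := by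
    intro S hS a ha b hb
    unfold lam
    rw [hS.2 a ha b hb, ← add_assoc, neg_add_cancel, zero_add]
  have keymul : ∀ a : B, (∀ b, lam a b = b) → ∀ c : B, a * c = a + c := by
    intro a ha c
    have := ha c
    unfold lam at this
    calc a * c = a + (-a + a * c) := by rw [← add_assoc, add_neg_cancel, zero_add]
    _ = a + c := by rw [this]
  constructor
  · ext k
    simp only [Set.mem_setOf_eq, Set.mem_inter_iff]
    constructor
    · intro hk
      obtain ⟨a, ha, c, hc, hkac⟩ := hprod k
      have haK : ∀ b, lam a b = b := by
        intro b
        obtain ⟨x, hx, y, hy, rfl⟩ := hsum b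
        have hcy : lam c y = y := triv A₂ h₂ c hc y hy
        have hay : lam a y = y := by
          have h1 : lam (a * c) y = y := by rw [← hkac]; exact hk y
          rwa [sb_lam_mul, hcy] at h1
        rw [sb_lam_add, triv A₁ h₁ a ha x hx, hay]
      have hcK : ∀ b, lam c b = b := by
        intro b
        have h1 : lam (a * c) b = b := by rw [← hkac]; exact hk b
        rwa [sb_lam_mul, haK] at h1
      exact ⟨a, ⟨haK, ha⟩, c, ⟨hcK, hc⟩, by rw [hkac, keymul a haK c]⟩
    · rintro ⟨a, ⟨haK, ha⟩, c, ⟨hcK, hc⟩, rfl⟩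
      intro b
      rw [← keymul a haK c, sb_lam_mul, hcK, haK]
  · rintro x ⟨hx1, hx2⟩ b
    obtain ⟨p, hp, q, hq, rfl⟩ := hsum b
    rw [sb_lam_add, triv A₁ h₁ x hx1 p hp, triv A₂ h₂ x hx2 q hq]
end

section
/- Let B = A₁ + A₂ = A₁A₂ be a skew left brace which is both the sum and product of two abelian subbraces A₁ and A₂. Then A₁ ∩ A₂ is contained in the centre Z(B) = Soc(B) ∩ Z(B,·). -/
open SkewBrace in
/-- If `B = A₁ + A₂ = A₁A₂` with `A₁`, `A₂` abelian subbraces, then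
`A₁ ∩ A₂ ⊆ Z(B) = Soc(B) ∩ Z(B,·)`. -/
theorem inter_subset_centre {B : Type*} [SkewBrace B] (A₁ A₂ : Set B)
    (h₁ : IsAbelianSubbrace A₁) (h₂ : IsAbelianSubbrace A₂)
    (hsum : ∀ x : B, ∃ a ∈ A₁, ∃ b ∈ A₂, x = a + b)
    (hprod : ∀ x : B, ∃ a ∈ A₁, ∃ b ∈ A₂, x = a * b) :
    A₁ ∩ A₂ ⊆ {a : B | (∀ b : B, lam a b = b ∧ a + b = b + a)} ∩
      {a : B | ∀ b : B, a * b = b * a} := by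
  rintro c ⟨hc1, hc2⟩
  obtain ⟨⟨_, ht1⟩, hcomm1⟩ := h₁
  obtain ⟨⟨_, ht2⟩, hcomm2⟩ := h₂
  constructor
  · intro b
    obtain ⟨a, ha, a', ha', rfl⟩ := hsum b
    constructor
    · have hla : lam c a = a := by
        simp [lam, ht1 c hc1 a ha]
      have hla' : lam c a' = a' := by
        simp [lam, ht2 c hc2 a' ha']
      have hadd : lam c (a + a') = lam c a + lam c a' := by
        simp [lam, SkewBrace.mul_add_dist, add_assoc]
      rw [hadd, hla, hla']
    · rw [← add_assoc, hcomm1 c hc1 a ha, add_assoc, hcomm2 c hc2 a' ha', ← add_assoc]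
  · intro b
    obtain ⟨x, hx, y, hy, rfl⟩ := hprod b
    have hcx : c * x = x * c := by
      rw [ht1 c hc1 x hx, ht1 x hx c hc1, hcomm1 c hc1 x hx]
    have hcy : c * y = y * c := by
      rw [ht2 c hc2 y hy, ht2 y hy c hc2, hcomm2 c hc2 y hy]
    rw [← mul_assoc, hcx, mul_assoc, hcy, ← mul_assoc]
end

section
/- Let B = A₁ + A₂ = A₁A₂ be a skew left brace which is both the sum and product of two abelian subbraces A₁ and A₂. Then Soc(B) = (Soc(B) ∩ A₁) + (Soc(B) ∩ A₂) and A₁ ∩ A₂ ⊆ Soc(B), i.e. the socle is a factorised ideal of B. -/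
namespace SkewBrace

variable {B : Type*} [SkewBrace B]

lemma SB_mul_zero {B : Type*} [SkewBrace B] (a : B) : a * (0 : B) = a := by
  have h := SkewBrace.mul_add_dist a 0 0
  rw [add_zero] at h
  have h2 : a * 0 + (0 : B) = a * 0 + (-a + a * 0) := by
    rw [add_zero, ← add_assoc]; exact h
  have h3 := (add_left_cancel h2).symm
  -- h3 : -a + a*0 = 0
  have := congrArg (a + ·) h3
  simpa [← add_assoc] using this

lemma SB_mul_neg {B : Type*} [SkewBrace B] (a b : B) :
    a * (-b) = a + -(a * b) + a := by
  have h := SkewBrace.mul_add_dist a b (-b)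
  rw [add_neg_cancel, SB_mul_zero] at h
  -- h : a = a * b + -a + a * (-b)
  have : -(a * b + -a) + a = -(a * b + -a) + (a * b + -a + a * (-b)) := by
    rw [← h]
  rw [neg_add_cancel_left] at this
  rw [← this, neg_add_rev, neg_neg, add_assoc]

lemma SB_lam_mul {B : Type*} [SkewBrace B] (a b x : B) :
    lam (a * b) x = lam a (lam b x) := by
  unfold SkewBrace.lam
  rw [SkewBrace.mul_add_dist a (-b) (b * x), SB_mul_neg, mul_assoc]
  simp [add_assoc]

lemma SB_lam_add {B : Type*} [SkewBrace B] (a x y : B) :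
    lam a (x + y) = lam a x + lam a y := by
  unfold SkewBrace.lam
  rw [SkewBrace.mul_add_dist]
  simp [add_assoc]

lemma SB_mul_eq_add_lam {B : Type*} [SkewBrace B] (a b : B) :
    a * b = a + lam a b := by
  unfold SkewBrace.lam
  rw [add_neg_cancel_left]

end SkewBrace

open SkewBrace in
/-- If `B = A₁ + A₂ = A₁A₂` with `A₁`, `A₂` abelian subbraces, then the socle
`Soc(B)` is a factorised ideal. -/
theorem socle_factorised {B : Type*} [SkewBrace B] (A₁ A₂ : Set B)
    (h₁ : IsAbelianSubbrace A₁) (h₂ : IsAbelianSubbrace A₂)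
    (hsum : ∀ x : B, ∃ a ∈ A₁, ∃ b ∈ A₂, x = a + b)
    (hprod : ∀ x : B, ∃ a ∈ A₁, ∃ b ∈ A₂, x = a * b) :
    {a : B | ∀ b : B, lam a b = b ∧ a + b = b + a} =
      {x : B | ∃ a ∈ {a : B | ∀ b : B, lam a b = b ∧ a + b = b + a} ∩ A₁,
        ∃ c ∈ {a : B | ∀ b : B, lam a b = b ∧ a + b = b + a} ∩ A₂, x = a + c} ∧
    A₁ ∩ A₂ ⊆ {a : B | ∀ b : B, lam a b = b ∧ a + b = b + a} := by
  obtain ⟨⟨_, htriv₁⟩, hcomm₁⟩ := h₁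
  obtain ⟨⟨_, htriv₂⟩, hcomm₂⟩ := h₂
  -- λ_u fixes A₁ pointwise for u ∈ A₁, similarly for A₂
  have lamfix₁ : ∀ u ∈ A₁, ∀ a ∈ A₁, lam u a = a := by
    intro u hu a ha
    unfold SkewBrace.lam
    rw [htriv₁ u hu a ha, neg_add_cancel_left]
  have lamfix₂ : ∀ v ∈ A₂, ∀ c ∈ A₂, lam v c = c := by
    intro v hv c hc
    unfold SkewBrace.lam
    rw [htriv₂ v hv c hc, neg_add_cancel_left]
  constructor
  · ext s
    simp only [Set.mem_setOf_eq, Set.mem_inter_iff]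
    constructor
    · intro hs
      obtain ⟨u, hu, v, hv, hsuv⟩ := hprod s
      have hls : ∀ x : B, lam s x = x := fun x => (hs x).1
      have hcen : ∀ x : B, s + x = x + s := fun x => (hs x).2
      have huv : ∀ x : B, lam u (lam v x) = x := by
        intro x
        rw [← SB_lam_mul, ← hsuv]
        exact hls x
      have hu2 : ∀ c ∈ A₂, lam u c = c := by
        intro c hc
        have := huv c
        rwa [lamfix₂ v hv c hc] at this
      have huid : ∀ x : B, lam u x = x := by
        intro x
        obtain ⟨a, ha, c, hc, rfl⟩ := hsum x
        rw [SB_lam_add, lamfix₁ u hu a ha, hu2 c hc]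
      have hvid : ∀ x : B, lam v x = x := by
        intro x
        have := huv x
        rwa [huid] at this
      have hsum' : s = u + v := by
        rw [hsuv, SB_mul_eq_add_lam, huid]
      have hucen : ∀ x : B, u + x = x + u := by
        have hc2 : ∀ c ∈ A₂, u + c = c + u := by
          intro c hc
          have h := hcen c
          rw [hsum', add_assoc, hcomm₂ v hv c hc, ← add_assoc, ← add_assoc] at h
          exact add_right_cancel h
        intro x
        obtain ⟨a, ha, c, hc, rfl⟩ := hsum x
        rw [← add_assoc, hcomm₁ u hu a ha, add_assoc, hc2 c hc, ← add_assoc]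
      have hnucen : ∀ x : B, -u + x = x + -u := by
        intro x
        have h := congrArg (fun y => -u + y + -u) (hucen x)
        simpa [add_assoc] using h.symm
      have hvcen : ∀ x : B, v + x = x + v := by
        intro x
        have hveq : v = -u + s := by rw [hsum', neg_add_cancel_left]
        rw [hveq, add_assoc, hcen x, ← add_assoc, hnucen x, add_assoc]
      exact ⟨u, ⟨fun b => ⟨huid b, hucen b⟩, hu⟩, v, ⟨fun b => ⟨hvid b, hvcen b⟩, hv⟩, hsum'⟩
    · rintro ⟨a, ⟨hasoc, ha1⟩, c, ⟨hcsoc, hc2⟩, rfl⟩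
      intro b
      constructor
      · have hac : a + c = a * c := by
          rw [SB_mul_eq_add_lam, (hasoc c).1]
        rw [hac, SB_lam_mul, (hcsoc b).1, (hasoc b).1]
      · rw [add_assoc, (hcsoc b).2, ← add_assoc, (hasoc b).2, add_assoc]
  · rintro c ⟨hc1, hc2⟩ b
    obtain ⟨a, ha, d, hd, rfl⟩ := hsum b
    constructor
    · rw [SB_lam_add, lamfix₁ c hc1 a ha, lamfix₂ c hc2 d hd]
    · rw [← add_assoc, hcomm₁ c hc1 a ha, add_assoc, hcomm₂ c hc2 d hd, ← add_assoc]
end
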